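/- arXiv:2004.09088 — 6 statements merged into one kernel-verified Lean document; each statement's English description precedes it below -/
import Mathlib

section
/- Let E : 𝓗 → ℝ be continuously differentiable and let P* ∈ 𝓜_N be a local minimizer of E over 𝓜_N. Then, with H* = ∇E(P*), one has P*H*(1−P*) = (1−P*)H*P* = 0; equivalently, [H*, P*] = 0. -/
open Matrix Filter Topology
open scoped BigOperators

attribute [local instance] Matrix.normedAddCommGroup Matrix.normedSpace

noncomputable section

/-- Square real matrices of size `n`. -/
abbrev Mat (n : ℕ) := Matrix (Fin n) (Fin n) ℝ

/-- Frobenius inner product `⟨A, B⟩ = Tr(AᵀB)`. -/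
def frobInner {n : ℕ} (A B : Mat n) : ℝ := (Aᵀ * B).trace

/-- Frobenius norm. -/
def frobNorm {n : ℕ} (A : Mat n) : ℝ := Real.sqrt ((Aᵀ * A).trace)

/-- The manifold `𝓜_N` of rank-`N` symmetric orthogonal projectors. -/
def projSet (n N : ℕ) : Set (Mat n) := {P | P.IsSymm ∧ P * P = P ∧ P.trace = (N : ℝ)}

/-- The tangent space `T_P 𝓜_N`. -/
def tangentSet {n : ℕ} (P : Mat n) : Set (Mat n) :=
  {X | X.IsSymm ∧ P * X + X * P = X ∧ X.trace = 0}

/-- The projection `Π_P(X) = P X (1 − P) + (1 − P) X P` onto the tangent space. -/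
def piT {n : ℕ} (P X : Mat n) : Mat n := P * X * (1 - P) + (1 - P) * X * P

/-- The operator `Ω_* X = −[P, [H, X]]`. -/
def OmegaOp {n : ℕ} (P H X : Mat n) : Mat n :=
  -(P * (H * X - X * H) - (H * X - X * H) * P)

open NormedSpace

/-! With `B = P* H* (1 - P*)`, the skew matrix `Ω = B - Bᵀ` generates the orthogonal matrices
`exp (t Ω)`, and conjugating `P*` by them gives a curve in `𝓜_N` through `P*` with velocity
`-(B + Bᵀ)`. Stationarity of `E` along this curve says `Tr (H* (B + Bᵀ)) = 0`, and this trace is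
`2 ‖B‖_F²` because `P*` is an orthogonal projector. -/

theorem IsLocalMinOn.hasFDerivAt_apply_eq_zero_of_hasDerivAt {E : Type*} [NormedAddCommGroup E]
    [NormedSpace ℝ E] {f : E → ℝ} {f' : E →L[ℝ] ℝ} {s : Set E} {a : E} {γ : ℝ → E} {v : E}
    (hmin : IsLocalMinOn f s a) (hf : HasFDerivAt f f' a) (hγ : HasDerivAt γ v 0) (hγ0 : γ 0 = a)
    (hγs : ∀ᶠ t in 𝓝 0, γ t ∈ s) : f' v = 0 := by
  subst hγ0
  have hγ_tendsto : Tendsto γ (𝓝 0) (𝓝[s] γ 0) :=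
    tendsto_nhdsWithin_iff.2 ⟨hγ.continuousAt.tendsto, hγs⟩
  have hmin_comp : IsLocalMin (f ∘ γ) 0 := hγ_tendsto.eventually hmin
  exact hmin_comp.hasDerivAt_eq_zero (hf.comp_hasDerivAt 0 hγ)

section OffDiagonal

variable {α : Type*} [Ring α]

theorem commutator_eq_offDiag_sub_offDiag (P H : α) :
    H * P - P * H = (1 - P) * H * P - P * H * (1 - P) := by
  noncomm_ring

theorem IsIdempotentElem.offDiag_sub_commutator {P : α} (hP : IsIdempotentElem P) (H : α) :
    (P * H * (1 - P) - (1 - P) * H * P) * P - P * (P * H * (1 - P) - (1 - P) * H * P) =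
      -(P * H * (1 - P) + (1 - P) * H * P) := by
  simp only [sub_mul, mul_sub, one_mul, mul_one, mul_assoc, hP.eq, ← mul_assoc P P]
  abel

end OffDiagonal

namespace Matrix

theorem trace_transpose_mul_self_eq_zero_iff {m n R : Type*} [Fintype m] [Fintype n]
    [PartialOrder R] [NonUnitalRing R] [StarRing R] [TrivialStar R] [StarOrderedRing R]
    [NoZeroDivisors R]
    {A : Matrix m n R} : (Aᵀ * A).trace = 0 ↔ A = 0 := by
  simpa only [conjTranspose_eq_transpose_of_trivial] using
    trace_conjTranspose_mul_self_eq_zero_iff (A := A)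

variable {m : Type*} [Fintype m] [DecidableEq m]

theorem trace_mul_offDiag_add {R : Type*} [CommRing R] {P : Matrix m m R}
    (hP : IsIdempotentElem P) (H : Matrix m m R) :
    (H * (P * H * (1 - P) + (1 - P) * H * P)).trace =
      2 * ((1 - P) * H * P * (P * H * (1 - P))).trace := by
  have hQ : (1 - P) * (1 - P) = 1 - P := hP.one_sub.eq
  calc (H * (P * H * (1 - P) + (1 - P) * H * P)).trace
      = (H * P * H * (1 - P)).trace + (H * (1 - P) * (H * P)).trace := by
        simp only [mul_add, trace_add, mul_assoc]
    _ = 2 * (H * P * H * (1 - P) * (1 - P)).trace := by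
        rw [trace_mul_comm (H * (1 - P)), two_mul, mul_assoc _ (1 - P), hQ, mul_assoc]
    _ = 2 * ((1 - P) * H * P * (P * H * (1 - P))).trace := by
        rw [trace_mul_comm]
        simp only [mul_assoc, ← mul_assoc P P, hP.eq]

-- `HasDerivAt` only sees the topology, so any algebra norm may be used to prove it.
open scoped Norms.Operator in
theorem hasDerivAt_exp_smul_mul_mul_exp_smul (A P B : Matrix m m ℝ) :
    HasDerivAt (fun t : ℝ => exp (t • A) * P * exp (t • B)) (A * P + P * B) 0 := by
  have h := ((hasDerivAt_exp_smul_const' (𝕂 := ℝ) A 0).mul_const P).mul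
    (hasDerivAt_exp_smul_const (𝕂 := ℝ) B 0)
  simp only [zero_smul, exp_zero, mul_one, one_mul] at h
  exact h

theorem transpose_exp_mul_exp_of_transpose_eq_neg {𝔸 : Type*} [NormedCommRing 𝔸]
    [NormedAlgebra ℚ 𝔸] [CompleteSpace 𝔸] {A : Matrix m m 𝔸} (hA : Aᵀ = -A) :
    (exp A)ᵀ * exp A = 1 := by
  rw [← exp_transpose, hA, ← exp_add_of_commute _ _ (Commute.refl A).neg_left, neg_add_cancel,
    exp_zero]

end Matrix

theorem conj_mem_projSet {n N : ℕ} {P U : Mat n} (hP : P ∈ projSet n N) (hU : Uᵀ * U = 1) :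
    U * P * Uᵀ ∈ projSet n N := by
  obtain ⟨hPs, hPP, hPtr⟩ := hP
  refine ⟨?_, ?_, ?_⟩
  · rw [IsSymm, transpose_mul, transpose_mul, transpose_transpose, hPs.eq, mul_assoc]
  · calc U * P * Uᵀ * (U * P * Uᵀ) = U * (P * (Uᵀ * U) * P) * Uᵀ := by simp only [mul_assoc]
      _ = U * P * Uᵀ := by rw [hU, mul_one, hPP, mul_assoc]
  · rw [trace_mul_cycle, hU, one_mul, hPtr]

theorem exp_conj_mem_projSet {n N : ℕ} {P Ω : Mat n} (hP : P ∈ projSet n N) (hΩ : Ωᵀ = -Ω)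
    (t : ℝ) : exp (t • Ω) * P * exp (t • Ωᵀ) ∈ projSet n N := by
  rw [← transpose_smul, exp_transpose]
  refine conj_mem_projSet hP (transpose_exp_mul_exp_of_transpose_eq_neg ?_)
  rw [transpose_smul, hΩ, smul_neg]

/-- first-order optimality condition. If `P*` is a local minimizer of a
continuously differentiable energy `E` over `𝓜_N`, and `H* = ∇E(P*)` (the gradient
with respect to the Frobenius inner product on symmetric matrices), then
`P*H*(1−P*) = (1−P*)H*P* = 0`, equivalently `[H*, P*] = 0`. -/
theorem first_order_optimality {Nb N : ℕ} (E : Mat Nb → ℝ) (hE : ContDiff ℝ 1 E)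
    (Pstar Hstar : Mat Nb)
    (hPmem : Pstar ∈ projSet Nb N)
    (hmin : IsLocalMinOn E (projSet Nb N) Pstar)
    (hHsym : Hstar.IsSymm)
    (hgrad : ∀ X : Mat Nb, X.IsSymm → fderiv ℝ E Pstar X = (Hstar * X).trace) :
    Pstar * Hstar * (1 - Pstar) = 0 ∧ (1 - Pstar) * Hstar * Pstar = 0 ∧
      Hstar * Pstar - Pstar * Hstar = 0 := by
  have hP_idem : IsIdempotentElem Pstar := hPmem.2.1
  have hB_transpose : (Pstar * Hstar * (1 - Pstar))ᵀ = (1 - Pstar) * Hstar * Pstar := by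
    simp only [transpose_mul, transpose_sub, transpose_one, hPmem.1.eq, hHsym.eq, mul_assoc]
  set B := Pstar * Hstar * (1 - Pstar)
  set Ω := B - Bᵀ with hΩ
  have hΩ_skew : Ωᵀ = -Ω := by rw [hΩ, transpose_sub, transpose_transpose, neg_sub]
  have hvelocity : Ω * Pstar + Pstar * Ωᵀ = -(B + Bᵀ) := by
    rw [hΩ_skew, mul_neg, ← sub_eq_add_neg, hΩ, hB_transpose]
    exact hP_idem.offDiag_sub_commutator Hstar
  have hcrit : fderiv ℝ E Pstar (-(B + Bᵀ)) = 0 :=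
    hvelocity ▸ hmin.hasFDerivAt_apply_eq_zero_of_hasDerivAt
      (hE.differentiable one_ne_zero _).hasFDerivAt
      (hasDerivAt_exp_smul_mul_mul_exp_smul Ω Pstar Ωᵀ) (by simp)
      (.of_forall (exp_conj_mem_projSet hPmem hΩ_skew))
  have hB_zero : B = 0 := by
    rw [hgrad _ (isSymm_add_transpose_self B).neg, mul_neg, trace_neg, neg_eq_zero, hB_transpose,
      trace_mul_offDiag_add hP_idem, ← hB_transpose, mul_eq_zero] at hcrit
    exact trace_transpose_mul_self_eq_zero_iff.mp (hcrit.resolve_left two_ne_zero)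
  refine ⟨hB_zero, by rw [← hB_transpose, hB_zero, transpose_zero], ?_⟩
  rw [commutator_eq_offDiag_sub_offDiag, ← hB_transpose, hB_zero, transpose_zero, zero_sub,
    neg_eq_zero]
  exact hB_zero
end
end

section
/- Let E : 𝓗 → ℝ be C² and let P* ∈ 𝓜_N be a nondegenerate local minimizer of E over 𝓜_N with constant η > 0, i.e. E(P) ≥ E(P*) + η‖P−P*‖_F² for all P ∈ 𝓜_N close enough to P*. Then the operator Ω* + K* : T_{P*}𝓜_N → T_{P*}𝓜_N satisfies the second-order optimality condition ⟨X, (Ω* + K*)X⟩ ≥ η‖X‖_F² for all X ∈ T_{P*}𝓜_N. -/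
open Matrix Filter Topology
open scoped BigOperators

attribute [local instance] Matrix.normedAddCommGroup Matrix.normedSpace

noncomputable section

/-
For a tangent vector `X`, the matrix `A = [X, P*]` is skew and `[A, P*] = X`, so
`c t = exp (t A) P* exp (-t A)` is a curve in `𝓜_N` with `c 0 = P*`, `c' 0 = X` and
`c'' 0 = [A, X]`. On `𝓜_N` the squared distance `‖Q - P*‖² = 2 (N - Tr (Q P*))` is affine in `Q`,
so quadratic growth of `E` makes `t ↦ E (c t) + 2 η Tr (c t P*)` locally minimal at `0`. Its second
derivative there, `∇²E(P*)[X, X] + ⟨H*, [A, X]⟩ - 2 η ‖X‖²`, is therefore nonnegative, and trace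
identities turn the first two terms into `⟨X, K* X⟩` and `⟨X, Ω* X⟩`.
-/

theorem IsLocalMin.deriv_deriv_nonneg {f : ℝ → ℝ} {a : ℝ} (h : IsLocalMin f a)
    (hc : ContinuousAt f a) : 0 ≤ deriv (deriv f) a := by
  by_contra! hneg
  have hmax : IsLocalMax f a := isLocalMax_of_deriv_deriv_neg hneg h.deriv_eq_zero hc
  have hconst : f =ᶠ[𝓝 a] fun _ => f a :=
    (Filter.Eventually.and h hmax).mono fun _ hx => le_antisymm hx.2 hx.1
  have hderiv : deriv f =ᶠ[𝓝 a] fun _ => 0 := hconst.deriv.trans (by simp)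
  simp [hderiv.deriv_eq] at hneg

section SecondVariation

variable {F G : Type*} [NormedAddCommGroup F] [NormedSpace ℝ F]
  [NormedAddCommGroup G] [NormedSpace ℝ G]

theorem ContDiff.hasDerivAt_fderiv_apply {f : F → G} (hf : ContDiff ℝ 2 f) {γ γ' : ℝ → F}
    {γ'' : F} {t : ℝ} (hγ : HasDerivAt γ (γ' t) t) (hγ' : HasDerivAt γ' γ'' t) :
    HasDerivAt (fun s => fderiv ℝ f (γ s) (γ' s))
      (fderiv ℝ (fderiv ℝ f) (γ t) (γ' t) (γ' t) + fderiv ℝ f (γ t) γ'') t :=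
  (((hf.fderiv_right le_rfl).differentiable one_ne_zero (γ t)).hasFDerivAt.comp_hasDerivAt t
    hγ).clm_apply hγ'

theorem IsLocalMin.second_variation_nonneg [FiniteDimensional ℝ F] {f : F → ℝ}
    (hf : ContDiff ℝ 2 f) (ℓ : F →ₗ[ℝ] ℝ) {γ γ' : ℝ → F} {γ'' : F}
    (hγ : ∀ t, HasDerivAt γ (γ' t) t) (hγ' : HasDerivAt γ' γ'' 0)
    (hmin : IsLocalMin (fun t => f (γ t) + ℓ (γ t)) 0) :
    0 ≤ fderiv ℝ (fderiv ℝ f) (γ 0) (γ' 0) (γ' 0) + fderiv ℝ f (γ 0) γ'' + ℓ γ'' := by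
  have hℓ (x : F) := (LinearMap.toContinuousLinearMap ℓ).hasFDerivAt (x := x)
  have hderiv (t : ℝ) : HasDerivAt (fun t => f (γ t) + ℓ (γ t))
      (fderiv ℝ f (γ t) (γ' t) + ℓ (γ' t)) t :=
    ((hf.differentiable two_ne_zero (γ t)).hasFDerivAt.comp_hasDerivAt t (hγ t)).add
      ((hℓ _).comp_hasDerivAt t (hγ t))
  have hderiv2 := (hf.hasDerivAt_fderiv_apply (hγ 0) hγ').add ((hℓ _).comp_hasDerivAt 0 hγ')
  have hnonneg := hmin.deriv_deriv_nonneg (hderiv 0).continuousAt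
  rw [funext fun t => (hderiv t).deriv] at hnonneg
  exact hnonneg.trans_eq hderiv2.deriv

end SecondVariation

section ConjCurve

variable {m : Type*} [Fintype m] [DecidableEq m]

def conjCurve (A P : Matrix m m ℝ) (t : ℝ) : Matrix m m ℝ :=
  NormedSpace.exp (t • A) * P * NormedSpace.exp (t • -A)

theorem exp_smul_neg_mul_exp_smul (A : Matrix m m ℝ) (t : ℝ) :
    NormedSpace.exp (t • -A) * NormedSpace.exp (t • A) = 1 := by
  rw [← Matrix.exp_add_of_commute _ _ (((Commute.refl A).neg_left.smul_left t).smul_right t),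
    smul_neg, neg_add_cancel, NormedSpace.exp_zero]

theorem conjCurve_zero (A P : Matrix m m ℝ) : conjCurve A P 0 = P := by
  simp [conjCurve, NormedSpace.exp_zero]

theorem conjCurve_transpose {A : Matrix m m ℝ} (hA : Aᵀ = -A) (P : Matrix m m ℝ) (t : ℝ) :
    (conjCurve A P t)ᵀ = conjCurve A Pᵀ t := by
  simp only [conjCurve, transpose_mul, ← Matrix.exp_transpose, transpose_smul, transpose_neg, hA,
    neg_neg, Matrix.mul_assoc]

theorem conjCurve_mul_self {P : Matrix m m ℝ} (hP : P * P = P) (A : Matrix m m ℝ) (t : ℝ) :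
    conjCurve A P t * conjCurve A P t = conjCurve A P t := by
  calc conjCurve A P t * conjCurve A P t
      = NormedSpace.exp (t • A) * P * (NormedSpace.exp (t • -A) * NormedSpace.exp (t • A)) * P *
          NormedSpace.exp (t • -A) := by simp only [conjCurve, Matrix.mul_assoc]
    _ = conjCurve A P t := by
      rw [exp_smul_neg_mul_exp_smul, Matrix.mul_one, Matrix.mul_assoc _ P P, hP, conjCurve]

theorem trace_conjCurve (A P : Matrix m m ℝ) (t : ℝ) : (conjCurve A P t).trace = P.trace := by
  rw [conjCurve, Matrix.trace_mul_cycle, exp_smul_neg_mul_exp_smul, Matrix.one_mul]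

section Derivatives

-- The normed-ring structure is only needed for the product rule; `HasDerivAt` itself depends on
-- the topology alone, so these results hold for every matrix norm.
open scoped Norms.Operator

theorem hasDerivAt_conjCurve (A P : Matrix m m ℝ) (t : ℝ) :
    HasDerivAt (conjCurve A P) ⁅A, conjCurve A P t⁆ t := by
  have h := ((hasDerivAt_exp_smul_const' A t).mul_const P).mul
    (hasDerivAt_exp_smul_const (-A) t)
  exact h.congr_deriv (by rw [Ring.lie_def, conjCurve]; noncomm_ring)

theorem HasDerivAt.const_lie {γ : ℝ → Matrix m m ℝ} {γ' : Matrix m m ℝ} {t : ℝ}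
    (h : HasDerivAt γ γ' t) (A : Matrix m m ℝ) :
    HasDerivAt (fun s => ⁅A, γ s⁆) ⁅A, γ'⁆ t := by
  simp only [Ring.lie_def]
  exact (h.const_mul A).sub (h.mul_const A)

end Derivatives

end ConjCurve

theorem trace_lie_mul {m R : Type*} [Fintype m] [CommRing R] (A B C : Matrix m m R) :
    (⁅A, B⁆ * C).trace = (A * ⁅B, C⁆).trace := by
  simp only [Ring.lie_def, Matrix.sub_mul, Matrix.mul_sub, trace_sub, Matrix.mul_assoc]
  rw [trace_mul_comm B (A * C), Matrix.mul_assoc]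

theorem trace_transpose_mul_self_nonneg {m k : Type*} [Fintype m] [Fintype k]
    (M : Matrix m k ℝ) : 0 ≤ (Mᵀ * M).trace := by
  simpa [conjTranspose_eq_transpose_of_trivial] using
    (posSemidef_conjTranspose_mul_self M).trace_nonneg

section Projectors

variable {n N : ℕ}

theorem frobNorm_sq (M : Mat n) : frobNorm M ^ 2 = (Mᵀ * M).trace :=
  Real.sq_sqrt (trace_transpose_mul_self_nonneg M)

theorem continuous_frobNorm : Continuous (frobNorm (n := n)) := by
  unfold frobNorm
  fun_prop

theorem frobNorm_zero : frobNorm (0 : Mat n) = 0 := by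
  simp [frobNorm]

theorem frobNorm_sub_sq_of_mem_projSet {P Q : Mat n} (hP : P ∈ projSet n N)
    (hQ : Q ∈ projSet n N) : frobNorm (Q - P) ^ 2 = 2 * (N - (Q * P).trace) := by
  obtain ⟨hPs, hPP, hPt⟩ := hP
  obtain ⟨hQs, hQQ, hQt⟩ := hQ
  rw [frobNorm_sq, transpose_sub, hPs.eq, hQs.eq]
  have hexpand : (Q - P) * (Q - P) = Q * Q - Q * P - P * Q + P * P := by noncomm_ring
  rw [hexpand, trace_add, trace_sub, trace_sub, trace_mul_comm P Q, hPP, hQQ, hPt, hQt]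
  ring

theorem conjCurve_mem_projSet {A P : Mat n} (hA : Aᵀ = -A) (hP : P ∈ projSet n N) (t : ℝ) :
    conjCurve A P t ∈ projSet n N :=
  ⟨by rw [IsSymm, conjCurve_transpose hA, hP.1.eq], conjCurve_mul_self hP.2.1 A t,
    by rw [trace_conjCurve, hP.2.2]⟩

theorem isLocalMin_add_trace_mul_of_quadratic_growth {E : Mat n → ℝ} {P : Mat n} {η : ℝ}
    (hP : P ∈ projSet n N)
    (hmin : ∃ ε > 0, ∀ Q ∈ projSet n N, frobNorm (Q - P) < ε →
      E P + η * frobNorm (Q - P) ^ 2 ≤ E Q)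
    {γ : ℝ → Mat n} (hγ : ∀ t, γ t ∈ projSet n N) (hγc : ContinuousAt γ 0) (hγ0 : γ 0 = P) :
    IsLocalMin (fun t => E (γ t) + 2 * η * (γ t * P).trace) 0 := by
  obtain ⟨ε, hε, hmin⟩ := hmin
  have hlim : Tendsto (fun t => frobNorm (γ t - P)) (𝓝 0) (𝓝 0) := by
    have := (continuous_frobNorm.tendsto _).comp (hγc.sub (continuousAt_const (y := P)))
    simpa [Function.comp_def, hγ0, frobNorm_zero] using this
  filter_upwards [hlim.eventually (gt_mem_nhds hε)] with t ht
  have hgrowth := hmin _ (hγ t) ht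
  rw [frobNorm_sub_sq_of_mem_projSet hP (hγ t)] at hgrowth
  simp only [hγ0, hP.2.1, hP.2.2]
  linarith

end Projectors

section Tangent

variable {n : ℕ} {P X : Mat n}

theorem frobInner_comm (A B : Mat n) : frobInner A B = frobInner B A := by
  rw [frobInner, frobInner, ← trace_transpose, transpose_mul, transpose_transpose]

theorem frobInner_add_right (A B C : Mat n) :
    frobInner A (B + C) = frobInner A B + frobInner A C := by
  rw [frobInner, frobInner, frobInner, Matrix.mul_add, trace_add]

theorem frobInner_piT (hP : P.IsSymm) (X Y : Mat n) :
    frobInner X (piT P Y) = frobInner (piT P X) Y := by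
  simp only [frobInner, piT, transpose_add, transpose_mul, transpose_sub, transpose_one, hP.eq,
    Matrix.mul_add, Matrix.add_mul, trace_add]
  congr 1 <;> rw [← trace_mul_cycle'] <;> simp only [Matrix.mul_assoc] <;>
    rw [trace_mul_cycle'] <;> simp only [Matrix.mul_assoc]

theorem mul_mul_eq_zero_of_tangent (hPP : P * P = P) (hX : P * X + X * P = X) :
    P * X * P = 0 := by
  have h : P * (P * X + X * P) = P * X := by rw [hX]
  rwa [Matrix.mul_add, ← Matrix.mul_assoc, ← Matrix.mul_assoc, hPP, add_eq_left] at h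

theorem piT_eq_self_of_tangent (hPP : P * P = P) (hX : P * X + X * P = X) : piT P X = X := by
  have h : piT P X = P * X + X * P - 2 • (P * X * P) := by
    rw [piT]; noncomm_ring
  rw [h, mul_mul_eq_zero_of_tangent hPP hX, hX, smul_zero, sub_zero]

theorem lie_lie_eq_self_of_tangent (hPP : P * P = P) (hX : P * X + X * P = X) :
    ⁅⁅X, P⁆, P⁆ = X := by
  have h : ⁅⁅X, P⁆, P⁆ = X * (P * P) - 2 • (P * X * P) + P * P * X := by
    simp only [Ring.lie_def]; noncomm_ring
  rw [h, mul_mul_eq_zero_of_tangent hPP hX, hPP, smul_zero, sub_zero, add_comm, hX]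

theorem transpose_lie_of_isSymm (hP : P.IsSymm) (hX : X.IsSymm) : ⁅X, P⁆ᵀ = -⁅X, P⁆ := by
  rw [Matrix.lie_transpose, hP.eq, hX.eq, Ring.lie_def, Ring.lie_def, neg_sub]

theorem isSymm_lie_lie (hP : P.IsSymm) (hX : X.IsSymm) : ⁅⁅X, P⁆, X⁆.IsSymm := by
  rw [IsSymm, Matrix.lie_transpose, transpose_lie_of_isSymm hP hX, hX.eq]
  simp only [Ring.lie_def]
  noncomm_ring

theorem trace_lie_lie_mul_of_tangent (hPP : P * P = P) (hX : P * X + X * P = X) :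
    (⁅⁅X, P⁆, X⁆ * P).trace = -(X * X).trace := by
  have hPXP := mul_mul_eq_zero_of_tangent hPP hX
  have hsq : ⁅X, P⁆ * ⁅X, P⁆ =
      X * (P * X * P) - X * (P * P) * X - P * X * X * P + P * X * P * X := by
    simp only [Ring.lie_def]; noncomm_ring
  have hXX : (X * X).trace = (X * P * X).trace + (X * X * P).trace := by
    nth_rw 2 [← hX]
    rw [Matrix.mul_add, trace_add, Matrix.mul_assoc, Matrix.mul_assoc]
  have hXPX : (X * P * X).trace = (X * X * P).trace := trace_mul_cycle X P X
  have hPXXP : (P * X * X * P).trace = (X * X * P).trace := by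
    rw [trace_mul_comm, ← Matrix.mul_assoc, ← Matrix.mul_assoc, hPP, trace_mul_cycle, hXPX]
  rw [trace_lie_mul, hsq, hPXP, hPP]
  simp only [Matrix.mul_zero, Matrix.zero_mul, zero_sub, add_zero, trace_sub, trace_neg]
  linarith

theorem frobInner_OmegaOp (hX : X.IsSymm) (H : Mat n) :
    frobInner X (OmegaOp P H X) = (H * ⁅⁅X, P⁆, X⁆).trace := by
  have hΩ : OmegaOp P H X = -⁅P, ⁅H, X⁆⁆ := by simp only [OmegaOp, Ring.lie_def]
  have hskew : ⁅⁅X, P⁆, H⁆ = -⁅H, ⁅X, P⁆⁆ := by simp only [Ring.lie_def, neg_sub]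
  rw [frobInner, hX.eq, hΩ, Matrix.mul_neg, trace_neg, ← trace_lie_mul, ← trace_lie_mul, hskew,
    Matrix.neg_mul, trace_neg, neg_neg, trace_lie_mul]

end Tangent

theorem second_order_optimality_general {Nb N : ℕ} (E : Mat Nb → ℝ) (hE : ContDiff ℝ 2 E)
    (Pstar Hstar : Mat Nb)
    (hPmem : Pstar ∈ projSet Nb N)
    (hgrad : ∀ X : Mat Nb, X.IsSymm → fderiv ℝ E Pstar X = (Hstar * X).trace)
    (hess : Mat Nb →ₗ[ℝ] Mat Nb)
    (hhess : ∀ X Y : Mat Nb, X.IsSymm → Y.IsSymm →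
      iteratedFDeriv ℝ 2 E Pstar ![X, Y] = frobInner (hess X) Y)
    (η : ℝ) (hη : 0 < η)
    (hmin : ∃ ε > 0, ∀ P ∈ projSet Nb N, frobNorm (P - Pstar) < ε →
      E Pstar + η * frobNorm (P - Pstar) ^ 2 ≤ E P) :
    ∀ X ∈ tangentSet Pstar,
      η * frobNorm X ^ 2 ≤
        frobInner X (OmegaOp Pstar Hstar X + piT Pstar (hess (piT Pstar X))) := by
  rintro X ⟨hXs, hXt, -⟩
  have hPP : Pstar * Pstar = Pstar := hPmem.2.1
  have hc := hasDerivAt_conjCurve ⁅X, Pstar⁆ Pstar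
  have hloc := isLocalMin_add_trace_mul_of_quadratic_growth hPmem hmin
    (conjCurve_mem_projSet (transpose_lie_of_isSymm hPmem.1 hXs) hPmem) (hc 0).continuousAt
    (conjCurve_zero _ _)
  have key := hloc.second_variation_nonneg hE
    ((2 * η) • (traceLinearMap _ ℝ ℝ ∘ₗ LinearMap.mulRight ℝ Pstar)) hc ((hc 0).const_lie _)
  have hD2 := hhess X X hXs hXs
  simp only [iteratedFDeriv_two_apply, Fin.isValue, cons_val_zero, cons_val_one,
    cons_val_fin_one] at hD2
  rw [conjCurve_zero, lie_lie_eq_self_of_tangent hPP hXt, hD2] at key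
  -- `erw`: `key` reaches `Mat Nb →L[ℝ] ℝ` through `Matrix.normedAddCommGroup`, `hgrad` does not
  erw [hgrad _ (isSymm_lie_lie hPmem.1 hXs)] at key
  simp only [LinearMap.smul_apply, LinearMap.comp_apply, traceLinearMap_apply,
    LinearMap.mulRight_apply, smul_eq_mul, trace_lie_lie_mul_of_tangent hPP hXt] at key
  rw [frobNorm_sq, hXs.eq, frobInner_add_right, frobInner_OmegaOp hXs,
    piT_eq_self_of_tangent hPP hXt, frobInner_piT hPmem.1, piT_eq_self_of_tangent hPP hXt,
    frobInner_comm]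
  have hXX : 0 ≤ (X * X).trace := by simpa [hXs.eq] using trace_transpose_mul_self_nonneg X
  linarith [mul_nonneg hη.le hXX]

/-- second-order optimality condition. If `P*` is a nondegenerate local
minimizer of a `C²` energy `E` over `𝓜_N` with constant `η > 0`, then for every
tangent vector `X`, `⟨X, (Ω* + K*)X⟩ ≥ η‖X‖_F²`, where `Ω* X = −[P*,[H*,X]]` and
`K* = Π_{P*} ∘ ∇²E(P*) ∘ Π_{P*}`. -/
theorem second_order_optimality {Nb N : ℕ} (E : Mat Nb → ℝ) (hE : ContDiff ℝ 2 E)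
    (Pstar Hstar : Mat Nb)
    (hPmem : Pstar ∈ projSet Nb N) (hHsym : Hstar.IsSymm)
    (hgrad : ∀ X : Mat Nb, X.IsSymm → fderiv ℝ E Pstar X = (Hstar * X).trace)
    (hess : Mat Nb →ₗ[ℝ] Mat Nb)
    (hesssym : ∀ X : Mat Nb, X.IsSymm → (hess X).IsSymm)
    (hhess : ∀ X Y : Mat Nb, X.IsSymm → Y.IsSymm →
      iteratedFDeriv ℝ 2 E Pstar ![X, Y] = frobInner (hess X) Y)
    (η : ℝ) (hη : 0 < η)
    (hmin : ∃ ε > 0, ∀ P ∈ projSet Nb N, frobNorm (P - Pstar) < ε →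
      E Pstar + η * frobNorm (P - Pstar) ^ 2 ≤ E P) :
    ∀ X ∈ tangentSet Pstar,
      η * frobNorm X ^ 2 ≤
        frobInner X (OmegaOp Pstar Hstar X + piT Pstar (hess (piT Pstar X))) :=
  second_order_optimality_general E hE Pstar Hstar hPmem hgrad hess hhess η hη hmin
end
end

section
/- Let V be a finite-dimensional real inner product space, and let Ω and K be self-adjoint linear operators on V such that Ω is positive definite and there exists η > 0 with ⟨X, (Ω + K)X⟩ ≥ η‖X‖² for all X ∈ V. Then every eigenvalue of the operator Id + Ω^{−1}K is real and bounded below by η/‖Ω‖_op, where ‖Ω‖_op is the operator norm of Ω. In particular all eigenvalues of Id + Ω^{−1}K are strictly positive. -/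
/-!
Write `μ = a + i c` and take a complex kernel vector `z` of `(1 - μ) A + B`. Its real and
imaginary parts give `x, y ∈ V`, not both zero, with
`(1 - a) Ω x + c Ω y + K x = 0` and `(1 - a) Ω y - c Ω x + K y = 0`.
Pairing these equations with `x` and `y` and using the symmetry of `Ω` and `K` shows
`c ⟪Ω⟫ = 0` and `⟪Ω + K⟫ = a ⟪Ω⟫`, where `⟪T⟫ := ⟪x, T x⟫ + ⟪y, T y⟫` is the Hermitian form
of `T` at `x + i y`. Since `⟪Ω⟫ > 0`, `c = 0`; and coercivity together with
`⟪Ω⟫ ≤ ‖Ω‖ (‖x‖² + ‖y‖²)` gives `η ≤ a ‖Ω‖`.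
-/

open Matrix
open scoped RealInnerProductSpace

section KernelVector

variable {ι : Type*} [Fintype ι]

theorem Matrix.re_map_ofReal_mulVec (M : Matrix ι ι ℝ) (z : ι → ℂ) (i : ι) :
    ((M.map Complex.ofReal *ᵥ z) i).re = (M *ᵥ fun j => (z j).re) i := by
  simp [mulVec, dotProduct, Complex.re_sum]

theorem Matrix.im_map_ofReal_mulVec (M : Matrix ι ι ℝ) (z : ι → ℂ) (i : ι) :
    ((M.map Complex.ofReal *ᵥ z) i).im = (M *ᵥ fun j => (z j).im) i := by
  simp [mulVec, dotProduct, Complex.im_sum]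

variable [DecidableEq ι] {V : Type*} [AddCommGroup V] [Module ℝ V]

theorem LinearMap.toMatrix_mulVec_eq_equivFun (b : Module.Basis ι ℝ V) (L : V →ₗ[ℝ] V)
    (w : ι → ℝ) : toMatrix b b L *ᵥ w = b.equivFun (L (b.equivFun.symm w)) := by
  conv_lhs => rw [← b.equivFun.apply_symm_apply w]
  exact L.toMatrix_mulVec_repr b b _

theorem exists_pencil_pair_of_det_eq_zero (b : Module.Basis ι ℝ V) (S T : V →ₗ[ℝ] V) {μ : ℂ}
    (h : ((1 - μ) • (LinearMap.toMatrix b b S).map Complex.ofReal +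
      (LinearMap.toMatrix b b T).map Complex.ofReal).det = 0) :
    ∃ x y : V, (x ≠ 0 ∨ y ≠ 0) ∧ (1 - μ.re) • S x + μ.im • S y + T x = 0 ∧
      (1 - μ.re) • S y - μ.im • S x + T y = 0 := by
  obtain ⟨z, hz0, hz⟩ := exists_mulVec_eq_zero_iff.mpr h
  have hcomp (i : ι) : (1 - μ) * ((LinearMap.toMatrix b b S).map Complex.ofReal *ᵥ z) i +
      ((LinearMap.toMatrix b b T).map Complex.ofReal *ᵥ z) i = 0 := by
    simpa [add_mulVec, smul_mulVec] using congrFun hz i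
  refine ⟨b.equivFun.symm fun i => (z i).re, b.equivFun.symm fun i => (z i).im, ?_, ?_, ?_⟩
  · by_contra! hxy
    refine hz0 (funext fun i => Complex.ext ?_ ?_)
    · simpa using congrFun (b.equivFun.symm.injective (hxy.1.trans (map_zero _).symm)) i
    · simpa using congrFun (b.equivFun.symm.injective (hxy.2.trans (map_zero _).symm)) i
  all_goals
    apply b.equivFun.injective
    funext i
    have hre := congrArg Complex.re (hcomp i)
    have him := congrArg Complex.im (hcomp i)
    simp only [Complex.add_re, Complex.add_im, Complex.mul_re, Complex.mul_im, Complex.sub_re,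
      Complex.sub_im, Complex.one_re, Complex.one_im, Complex.zero_re, Complex.zero_im,
      re_map_ofReal_mulVec, im_map_ofReal_mulVec, LinearMap.toMatrix_mulVec_eq_equivFun] at hre him
    simp only [map_add, map_sub, map_smul, map_zero, Pi.add_apply, Pi.sub_apply, Pi.smul_apply,
      smul_eq_mul, Pi.zero_apply]
    linarith

end KernelVector

section InnerProduct

variable {V : Type*} [NormedAddCommGroup V] [InnerProductSpace ℝ V]

theorem real_inner_self_map_le_opNorm_mul_sq (T : V →L[ℝ] V) (v : V) :
    ⟪v, T v⟫ ≤ ‖T‖ * ‖v‖ ^ 2 :=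
  calc ⟪v, T v⟫ ≤ ‖v‖ * ‖T v‖ := real_inner_le_norm _ _
    _ ≤ ‖v‖ * (‖T‖ * ‖v‖) := by gcongr; exact T.le_opNorm v
    _ = ‖T‖ * ‖v‖ ^ 2 := by ring

theorem LinearMap.IsSymmetric.pencil_pair_inner_eq {S T : V →ₗ[ℝ] V} (hS : S.IsSymmetric)
    (hT : T.IsSymmetric) {a c : ℝ} {x y : V}
    (hx : (1 - a) • S x + c • S y + T x = 0) (hy : (1 - a) • S y - c • S x + T y = 0) :
    c * (⟪x, S x⟫ + ⟪y, S y⟫) = 0 ∧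
      ⟪x, S x + T x⟫ + ⟪y, S y + T y⟫ = a * (⟪x, S x⟫ + ⟪y, S y⟫) := by
  have hSxy : ⟪y, S x⟫ = ⟪x, S y⟫ := by rw [← hS, real_inner_comm]
  have hTxy : ⟪y, T x⟫ = ⟪x, T y⟫ := by rw [← hT, real_inner_comm]
  have hxx := congrArg (⟪x, ·⟫) hx
  have hyy := congrArg (⟪y, ·⟫) hy
  have hyx := congrArg (⟪y, ·⟫) hx
  have hxy := congrArg (⟪x, ·⟫) hy
  simp only [inner_add_right, inner_sub_right, real_inner_smul_right, inner_zero_right]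
    at hxx hyy hyx hxy
  refine ⟨?_, ?_⟩
  · linear_combination hyx - hxy - (1 - a) * hSxy - hTxy
  · simp only [inner_add_right]
    linear_combination hxx + hyy + c * hSxy

end InnerProduct

/-- The eigenvalues `μ` of `Id + Ω⁻¹K` are encoded as the roots of `det((1 - μ)A + B)`, where
`A`, `B` are the complexified matrices of `Ω`, `K`: `(1 - μ)A + B = A(Id + A⁻¹B - μ)`. -/
theorem scf_jacobian_spectrum_real_positive
    {V : Type*} [NormedAddCommGroup V] [InnerProductSpace ℝ V] [FiniteDimensional ℝ V]
    (Om K : V →L[ℝ] V)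
    (hOmSa : ∀ x y : V, (inner ℝ (Om x) y : ℝ) = inner ℝ x (Om y))
    (hKSa : ∀ x y : V, (inner ℝ (K x) y : ℝ) = inner ℝ x (K y))
    (hOmPos : ∀ x : V, x ≠ 0 → (0 : ℝ) < inner ℝ x (Om x))
    (η : ℝ) (hη : 0 < η)
    (hcoer : ∀ x : V, η * ‖x‖ ^ 2 ≤ (inner ℝ x (Om x + K x) : ℝ)) :
    ∀ μ : ℂ,
      (((1 - μ) • ((LinearMap.toMatrix (Module.finBasis ℝ V) (Module.finBasis ℝ V)
            (Om : V →ₗ[ℝ] V)).map Complex.ofReal) +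
          ((LinearMap.toMatrix (Module.finBasis ℝ V) (Module.finBasis ℝ V)
            (K : V →ₗ[ℝ] V)).map Complex.ofReal)).det = 0) →
      μ.im = 0 ∧ η / ‖Om‖ ≤ μ.re ∧ 0 < μ.re := by
  intro μ hdet
  obtain ⟨x, y, hxy, hx, hy⟩ := exists_pencil_pair_of_det_eq_zero _ _ _ hdet
  obtain ⟨him, hre⟩ := LinearMap.IsSymmetric.pencil_pair_inner_eq hOmSa hKSa hx hy
  simp only [ContinuousLinearMap.coe_coe] at him hre
  have hOm_nonneg (v : V) : 0 ≤ ⟪v, Om v⟫ := by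
    rcases eq_or_ne v 0 with rfl | hv
    · simp
    · exact (hOmPos v hv).le
  have hP : 0 < ⟪x, Om x⟫ + ⟪y, Om y⟫ := by
    rcases hxy with hx0 | hy0
    · linarith [hOmPos x hx0, hOm_nonneg y]
    · linarith [hOmPos y hy0, hOm_nonneg x]
  have hlow : η * (‖x‖ ^ 2 + ‖y‖ ^ 2) ≤ μ.re * (⟪x, Om x⟫ + ⟪y, Om y⟫) := by
    linarith [hcoer x, hcoer y]
  have hup : ⟪x, Om x⟫ + ⟪y, Om y⟫ ≤ ‖Om‖ * (‖x‖ ^ 2 + ‖y‖ ^ 2) := by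
    linarith [real_inner_self_map_le_opNorm_mul_sq Om x, real_inner_self_map_le_opNorm_mul_sq Om y]
  have hNs := hP.trans_le hup
  have hN : 0 < ‖Om‖ := pos_of_mul_pos_left hNs (by positivity)
  have hs : 0 < ‖x‖ ^ 2 + ‖y‖ ^ 2 := pos_of_mul_pos_right hNs hN.le
  have hre_pos : 0 < μ.re := pos_of_mul_pos_left ((by positivity : 0 < η * _).trans_le hlow) hP.le
  refine ⟨(mul_eq_zero.mp him).resolve_right hP.ne', ?_, hre_pos⟩
  rw [div_le_iff₀ hN]
  refine le_of_mul_le_mul_right ?_ hs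
  calc η * (‖x‖ ^ 2 + ‖y‖ ^ 2) ≤ μ.re * (⟪x, Om x⟫ + ⟪y, Om y⟫) := hlow
    _ ≤ μ.re * (‖Om‖ * (‖x‖ ^ 2 + ‖y‖ ^ 2)) := by gcongr
    _ = μ.re * ‖Om‖ * (‖x‖ ^ 2 + ‖y‖ ^ 2) := by ring
end

section
/- For ε > 0, consider the energy E_ε(P) = Tr((P − M_ε)²) on the set 𝓜₁ of 2×2 real symmetric matrices P with P² = P and Tr(P) = 1, where M_ε = [[1, ε],[ε, 0]]. Set a(ε) = (1 − √(1 − 4ε²/(1+4ε²)))/2 and P(a,b) = [[1−a, b],[b, a]]. Then the minimum of E_ε over 𝓜₁ is attained at P(a(ε), √(a(ε)(1−a(ε)))), and for every a ∈ [0,1], E_ε(P(a, √(a(1−a)))) = 2(a + ε² − 2ε√(a(1−a))) ≤ E_ε(P(a, −√(a(1−a)))). -/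
/-!
On `𝓜₁` write `P = [[1 - a, b], [b, a]]` with `b² = a(1 - a)`. Then
`E_ε(P) = 2a² + 2(b - ε)² = 2ε² + 1 - ((1 - 2a) + 4εb)`, and since `(1 - 2a)² + (2b)² = 1`,
Cauchy–Schwarz gives `(1 - 2a) + 4εb ≤ √(1 + 4ε²)`, with equality at
`(1 - 2a, 2b) = (1, 2ε) / √(1 + 4ε²)`, which is exactly `P(a(ε), √(a(ε)(1 - a(ε))))`.
-/

open Matrix

section ProjectorParametrization

variable {R : Type*} [CommRing R]

lemma isSymm_of_fin_two (a b : R) : (!![1 - a, b; b, a]).IsSymm := by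
  ext i j; fin_cases i <;> fin_cases j <;> rfl

lemma mul_self_of_fin_two_of_sq_eq {a b : R} (hb : b ^ 2 = a * (1 - a)) :
    !![1 - a, b; b, a] * !![1 - a, b; b, a] = !![1 - a, b; b, a] := by
  rw [mul_fin_two, show (1 - a) * (1 - a) + b * b = 1 - a by linear_combination hb,
    show b * b + a * a = a by linear_combination hb, show (1 - a) * b + b * a = b by ring,
    show b * (1 - a) + a * b = b by ring]

lemma trace_of_fin_two (a b : R) : (!![1 - a, b; b, a]).trace = 1 := by
  rw [trace_fin_two_of, sub_add_cancel]

lemma exists_eq_of_fin_two_of_isSymm_of_mul_self {P : Matrix (Fin 2) (Fin 2) R}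
    (hsymm : P.IsSymm) (hidem : P * P = P) (htr : P.trace = 1) :
    ∃ a b : R, P = !![1 - a, b; b, a] ∧ b ^ 2 = a * (1 - a) := by
  have h10 : P 1 0 = P 0 1 := hsymm.apply 0 1
  have h00 : P 0 0 = 1 - P 1 1 := by
    rw [← htr, trace_fin_two]; ring
  have h11 : (P * P) 1 1 = P 1 1 := by rw [hidem]
  rw [mul_apply, Fin.sum_univ_two, h10] at h11
  refine ⟨P 1 1, P 0 1, ?_, by linear_combination h11⟩
  ext i j; fin_cases i <;> fin_cases j <;> simp [h00, h10]

lemma trace_sq_sub_fin_two_of_sq_eq {a b : R} (ε : R) (hb : b ^ 2 = a * (1 - a)) :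
    ((!![1 - a, b; b, a] - !![1, ε; ε, 0]) * (!![1 - a, b; b, a] - !![1, ε; ε, 0])).trace
      = 2 * (a + ε ^ 2 - 2 * ε * b) := by
  have hsub : !![1 - a, b; b, a] - !![1, ε; ε, 0] = !![-a, b - ε; b - ε, a] := by
    ext i j; fin_cases i <;> fin_cases j <;> simp
  rw [hsub, mul_fin_two, trace_fin_two_of]
  linear_combination 2 * hb

end ProjectorParametrization

lemma one_sub_two_mul_add_four_mul_le_sqrt {a b : ℝ} (ε : ℝ) (hb : b ^ 2 = a * (1 - a)) :
    (1 - 2 * a) + 4 * ε * b ≤ √(1 + 4 * ε ^ 2) :=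
  (le_abs_self _).trans <| Real.abs_le_sqrt <| by
    nlinarith [sq_nonneg (2 * ε * (1 - 2 * a) - 2 * b)]

lemma sqrt_one_sub_div_one_add (ε : ℝ) :
    √(1 - 4 * ε ^ 2 / (1 + 4 * ε ^ 2)) = (√(1 + 4 * ε ^ 2))⁻¹ := by
  have hpos : (0 : ℝ) < 1 + 4 * ε ^ 2 := by positivity
  rw [← Real.sqrt_inv, one_sub_div hpos.ne', add_sub_cancel_right, one_div]

/-- the tunable-gap toy model. For `ε > 0`, the energy
`E_ε(P) = Tr((P − M_ε)²)` with `M_ε = [[1, ε],[ε, 0]]` attains its minimum over the set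
`𝓜₁` of 2×2 symmetric rank-one orthogonal projectors at `P(a(ε), √(a(ε)(1−a(ε))))`, with
`a(ε) = (1 − √(1 − 4ε²/(1+4ε²)))/2`; moreover for every `a ∈ [0,1]`, on the branch
`b = +√(a(1−a))` the energy equals `2(a + ε² − 2ε√(a(1−a)))` and is no larger than on
the branch `b = −√(a(1−a))`. -/
theorem toy_model_minimizer (ε : ℝ) (hε : 0 < ε) :
    let M : Matrix (Fin 2) (Fin 2) ℝ := !![1, ε; ε, 0]
    let E : Matrix (Fin 2) (Fin 2) ℝ → ℝ := fun P => ((P - M) * (P - M)).trace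
    let Pab : ℝ → ℝ → Matrix (Fin 2) (Fin 2) ℝ := fun a b => !![1 - a, b; b, a]
    let M1 : Set (Matrix (Fin 2) (Fin 2) ℝ) :=
      {P | P.IsSymm ∧ P * P = P ∧ P.trace = 1}
    let aeps : ℝ := (1 - Real.sqrt (1 - 4 * ε ^ 2 / (1 + 4 * ε ^ 2))) / 2
    let Pmin : Matrix (Fin 2) (Fin 2) ℝ := Pab aeps (Real.sqrt (aeps * (1 - aeps)))
    Pmin ∈ M1 ∧
    (∀ P ∈ M1, E Pmin ≤ E P) ∧
    (∀ a : ℝ, 0 ≤ a → a ≤ 1 →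
      E (Pab a (Real.sqrt (a * (1 - a)))) = 2 * (a + ε ^ 2 - 2 * ε * Real.sqrt (a * (1 - a))) ∧
      E (Pab a (Real.sqrt (a * (1 - a)))) ≤ E (Pab a (-Real.sqrt (a * (1 - a))))) := by
  intro M E Pab M1 aeps Pmin
  set s := √(1 + 4 * ε ^ 2)
  have hs : s ^ 2 = 1 + 4 * ε ^ 2 := Real.sq_sqrt (by positivity)
  have hs_pos : 0 < s := Real.sqrt_pos.2 (by positivity)
  have haeps : aeps = (1 - s⁻¹) / 2 := by
    simp only [aeps, sqrt_one_sub_div_one_add, s]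
  have hbmin_sq : (ε / s) ^ 2 = aeps * (1 - aeps) := by
    rw [haeps]; field_simp; linear_combination -hs
  have hbmin : √(aeps * (1 - aeps)) = ε / s := by
    rw [← hbmin_sq, Real.sqrt_sq (div_pos hε hs_pos).le]
  have hEmin : aeps - 2 * ε * (ε / s) = (1 - s) / 2 := by
    rw [haeps]; field_simp; linear_combination hs
  refine ⟨?_, ?_, fun a ha0 ha1 => ?_⟩
  · show Pab aeps _ ∈ M1
    rw [hbmin]
    exact ⟨isSymm_of_fin_two _ _, mul_self_of_fin_two_of_sq_eq hbmin_sq, trace_of_fin_two _ _⟩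
  · rintro P ⟨hsymm, hidem, htr⟩
    obtain ⟨a, b, rfl, hb⟩ := exists_eq_of_fin_two_of_isSymm_of_mul_self hsymm hidem htr
    show E (Pab aeps _) ≤ E (Pab a b)
    simp only [E, Pab, M, hbmin, trace_sq_sub_fin_two_of_sq_eq ε hb,
      trace_sq_sub_fin_two_of_sq_eq ε hbmin_sq]
    linarith [one_sub_two_mul_add_four_mul_le_sqrt ε hb, hEmin]
  · have hb : √(a * (1 - a)) ^ 2 = a * (1 - a) := Real.sq_sqrt (mul_nonneg ha0 (sub_nonneg.2 ha1))
    have hb_neg : (-√(a * (1 - a))) ^ 2 = a * (1 - a) := by rw [neg_sq, hb]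
    refine ⟨trace_sq_sub_fin_two_of_sq_eq ε hb, ?_⟩
    simp only [E, Pab, M, trace_sq_sub_fin_two_of_sq_eq ε hb,
      trace_sq_sub_fin_two_of_sq_eq ε hb_neg]
    linarith [mul_nonneg hε.le (Real.sqrt_nonneg (a * (1 - a)))]
end

section
/- Let N_b ≥ 3, δ = 1/N_b, let V_1,…,V_{N_b} be real numbers, and let h be the N_b×N_b real symmetric matrix with h_{ii} = δ^{−2} + V_i, h_{i,i+1} = h_{i,i−1} = −1/(2δ²) (indices taken cyclically modulo N_b), and all other entries zero. For α ≥ 0 define E_α(P) = Tr(hP) + (α/2)δ^{−1} Σ_{i=1}^{N_b} P_{ii}². Then the minimization of E_α over 𝓜₁ = {P symmetric : P² = P, Tr(P) = 1} has a unique minimizer P*. Moreover P* = φ*φ*ᵀ for a unit vector φ* ∈ ℝ^{N_b} with all entries strictly positive, and P* satisfies the strong Aufbau principle: the lowest eigenvalue of the mean-field matrix H* = ∇E_α(P*) (the matrix with entries (H*)_{ij} = h_{ij} + δ_{ij}·αδ^{−1}(P*)_{ii}) is simple and φ* is an associated eigenvector. -/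
/-!
Rank-one projections `φ φᵀ` with `φ ⬝ᵥ φ = 1` are exactly the elements of `𝓜₁`, and
`E_α(φ φᵀ) = φᵀ h φ + K ∑ φᵢ⁴` with `K = α / (2δ)`, so everything reduces to minimizing this
quartic energy on the unit sphere. The off-diagonal entries of `h` are `≤ 0`, and `< 0` along the
cycle `i → i + 1`; hence `|φ|` is a minimizer whenever `φ` is, and by a Perron–Frobenius argument a
nonnegative eigenvector of `h + diag` vanishes nowhere. Applied to the Euler–Lagrange equation
`(h + 2K diag φ²) φ = ε φ`, this gives a positive minimizer.

For two positive minimizers `φ, ρ`, the vector `χ = √((φ² + ρ²) / 2)` lies on the sphere and has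
`E χ ≤ (E φ + E ρ) / 2`, with equality only if `φᵢ ρᵢ₊₁ = ρᵢ φᵢ₊₁` along the cycle; so `ρ = φ`. A
general minimizer `ψ` and `|ψ|` are eigenvectors of the same mean-field matrix for the same
eigenvalue, which forces `ψ = ± |ψ|`. Finally, a positive eigenvector of a symmetric such matrix
belongs to its lowest eigenvalue, and that eigenvalue is simple: if `w ⊥ φ` were another
eigenvector, `|w|` would also minimize the Rayleigh quotient, so `w = ± |w|`, contradicting
`w ⊥ φ > 0`.
-/

open Matrix

namespace GrossPitaevskii

section Sphere

variable {n : Type*} [Fintype n]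

def dotSphere (n : Type*) [Fintype n] : Set (n → ℝ) := {x | x ⬝ᵥ x = 1}

lemma isCompact_dotSphere : IsCompact (dotSphere n) := by
  refine Metric.isCompact_of_isClosed_isBounded
    (isClosed_eq (by unfold dotProduct; fun_prop) continuous_const) ?_
  refine (Metric.isBounded_iff_subset_closedBall 0).2 ⟨1, fun x hx => ?_⟩
  rw [Metric.mem_closedBall, dist_zero_right, pi_norm_le_iff_of_nonneg zero_le_one]
  intro i
  rw [Real.norm_eq_abs, ← sq_le_one_iff_abs_le_one, ← (hx : x ⬝ᵥ x = 1), sq]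
  exact Finset.single_le_sum (f := fun j => x j * x j) (fun j _ => mul_self_nonneg _)
    (Finset.mem_univ i)

lemma dotSphere_nonempty [DecidableEq n] [Nonempty n] : (dotSphere n).Nonempty := by
  obtain ⟨i⟩ := ‹Nonempty n›
  exact ⟨Pi.single i 1, by simp [dotSphere]⟩

lemma ne_zero_of_mem_dotSphere {x : n → ℝ} (hx : x ∈ dotSphere n) : x ≠ 0 := by
  rintro rfl
  simp [dotSphere] at hx

lemma dotProduct_self_pos {y : n → ℝ} (hy : y ≠ 0) : 0 < y ⬝ᵥ y := by
  simpa using dotProduct_self_star_pos_iff.2 hy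

lemma inv_sqrt_smul_mem_dotSphere {y : n → ℝ} (hy : y ≠ 0) :
    (√(y ⬝ᵥ y))⁻¹ • y ∈ dotSphere n := by
  have hpos := dotProduct_self_pos hy
  show _ ⬝ᵥ _ = 1
  rw [smul_dotProduct, dotProduct_smul, smul_eq_mul, smul_eq_mul, ← mul_assoc, ← sq,
    inv_pow, Real.sq_sqrt hpos.le, inv_mul_cancel₀ hpos.ne']

lemma abs_dotProduct_abs (x : n → ℝ) : |x| ⬝ᵥ |x| = x ⬝ᵥ x :=
  Finset.sum_congr rfl fun i _ => abs_mul_abs_self (x i)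

lemma abs_mem_dotSphere {x : n → ℝ} (hx : x ∈ dotSphere n) : |x| ∈ dotSphere n :=
  (abs_dotProduct_abs x).trans hx

lemma vecMulVec_mul_vecMulVec_self {φ : n → ℝ} (hφ : φ ∈ dotSphere n) :
    vecMulVec φ φ * vecMulVec φ φ = vecMulVec φ φ := by
  rw [vecMulVec_mul_vecMulVec, (hφ : φ ⬝ᵥ φ = 1), one_smul]

end Sphere

section Projection

variable {n : Type*} [Fintype n]

lemma eq_zero_of_isSymm_of_trace_eq_zero {Q : Matrix n n ℝ} (hs : Q.IsSymm) (hi : Q * Q = Q)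
    (ht : Q.trace = 0) : Q = 0 := by
  rw [← trace_conjTranspose_mul_self_eq_zero_iff, conjTranspose_eq_transpose_of_trivial, hs.eq,
    hi, ht]

variable [DecidableEq n]

lemma exists_mem_dotSphere_mulVec_eq_self {P : Matrix n n ℝ} (hi : P * P = P) (hP : P ≠ 0) :
    ∃ φ ∈ dotSphere n, P *ᵥ φ = φ := by
  obtain ⟨j, hj⟩ : ∃ j, P *ᵥ Pi.single j 1 ≠ 0 := by
    by_contra! h
    exact hP (ext_of_mulVec_single fun j => by rw [h j, zero_mulVec])
  refine ⟨_, inv_sqrt_smul_mem_dotSphere hj, ?_⟩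
  rw [mulVec_smul, mulVec_mulVec, hi]

theorem exists_eq_vecMulVec_of_isSymm {P : Matrix n n ℝ} (hs : P.IsSymm) (hi : P * P = P)
    (ht : P.trace = 1) : ∃ φ ∈ dotSphere n, P = vecMulVec φ φ := by
  obtain ⟨φ, hφ, hPφ⟩ := exists_mem_dotSphere_mulVec_eq_self hi (by rintro rfl; simp at ht)
  have hφP : φ ᵥ* P = φ := by rw [← hs.eq, vecMul_transpose, hPφ]
  refine ⟨φ, hφ, sub_eq_zero.1 (eq_zero_of_isSymm_of_trace_eq_zero ?_ ?_ ?_)⟩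
  · exact hs.sub (transpose_vecMulVec φ φ)
  · rw [mul_sub, sub_mul, sub_mul, hi, mul_vecMulVec, vecMulVec_mul, hPφ, hφP,
      vecMulVec_mul_vecMulVec_self hφ]
    abel
  · rw [trace_sub, ht, trace_vecMulVec, (hφ : φ ⬝ᵥ φ = 1), sub_self]

theorem isSymm_mul_self_trace_eq_one_iff {P : Matrix n n ℝ} :
    (P.IsSymm ∧ P * P = P ∧ P.trace = 1) ↔ ∃ φ ∈ dotSphere n, P = vecMulVec φ φ := by
  refine ⟨fun ⟨hs, hi, ht⟩ => exists_eq_vecMulVec_of_isSymm hs hi ht, ?_⟩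
  rintro ⟨φ, hφ, rfl⟩
  exact ⟨transpose_vecMulVec φ φ, vecMulVec_mul_vecMulVec_self hφ, (trace_vecMulVec φ φ).trans hφ⟩

end Projection

section QuadraticForm

variable {n : Type*} [Fintype n]

lemma dotProduct_mulVec_comm {A : Matrix n n ℝ} (hA : A.IsSymm) (x y : n → ℝ) :
    x ⬝ᵥ A *ᵥ y = y ⬝ᵥ A *ᵥ x := by
  rw [dotProduct_mulVec, ← mulVec_transpose, hA.eq, dotProduct_comm]

lemma dotProduct_mulVec_eq_sum (A : Matrix n n ℝ) (x y : n → ℝ) :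
    x ⬝ᵥ A *ᵥ y = ∑ i, ∑ j, x i * A i j * y j := by
  simp only [dotProduct, mulVec, Finset.mul_sum, mul_assoc]

lemma abs_dotProduct_mulVec_abs_le {A : Matrix n n ℝ} (hA : ∀ i j, i ≠ j → A i j ≤ 0)
    (x : n → ℝ) : |x| ⬝ᵥ A *ᵥ |x| ≤ x ⬝ᵥ A *ᵥ x := by
  rw [dotProduct_mulVec_eq_sum, dotProduct_mulVec_eq_sum]
  refine Finset.sum_le_sum fun i _ => Finset.sum_le_sum fun j _ => ?_
  simp only [Pi.abs_apply]
  rcases eq_or_ne i j with rfl | hij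
  · rw [mul_right_comm, abs_mul_abs_self, mul_right_comm]
  · have := mul_le_mul_of_nonpos_left (le_abs_self (x i * x j)) (hA i j hij)
    rw [abs_mul] at this
    linarith

lemma dotProduct_pos_of_pos {φ y : n → ℝ} (hφ : ∀ i, 0 < φ i) (hy : 0 ≤ y) (hy0 : y ≠ 0) :
    0 < φ ⬝ᵥ y := by
  obtain ⟨i, hi⟩ := Function.ne_iff.1 hy0
  exact Finset.sum_pos' (fun j _ => mul_nonneg (hφ j).le (hy j))
    ⟨i, Finset.mem_univ i, mul_pos (hφ i) (lt_of_le_of_ne (hy i) (Ne.symm hi))⟩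

lemma hasDerivAt_dotProduct_mulVec_line (A : Matrix n n ℝ) (x w : n → ℝ) :
    HasDerivAt (fun t : ℝ => (x + t • w) ⬝ᵥ A *ᵥ (x + t • w))
      (w ⬝ᵥ A *ᵥ x + x ⬝ᵥ A *ᵥ w) 0 := by
  have hpoly : (fun t : ℝ => (x + t • w) ⬝ᵥ A *ᵥ (x + t • w)) = fun t =>
      x ⬝ᵥ A *ᵥ x + t * (w ⬝ᵥ A *ᵥ x + x ⬝ᵥ A *ᵥ w) + t ^ 2 * (w ⬝ᵥ A *ᵥ w) := by
    ext t
    simp only [mulVec_add, mulVec_smul, dotProduct_add, add_dotProduct, dotProduct_smul,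
      smul_dotProduct, smul_eq_mul]
    ring
  rw [hpoly]
  simpa using (((hasDerivAt_id (0 : ℝ)).mul_const (w ⬝ᵥ A *ᵥ x + x ⬝ᵥ A *ᵥ w)).const_add
    (x ⬝ᵥ A *ᵥ x)).fun_add ((hasDerivAt_pow 2 (0 : ℝ)).mul_const (w ⬝ᵥ A *ᵥ w))

lemma hasDerivAt_dotProduct_self_line (x w : n → ℝ) :
    HasDerivAt (fun t : ℝ => (x + t • w) ⬝ᵥ (x + t • w)) (w ⬝ᵥ x + x ⬝ᵥ w) 0 := by
  classical
  simpa using hasDerivAt_dotProduct_mulVec_line 1 x w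

lemma hasDerivAt_sum_pow_four_line (x w : n → ℝ) :
    HasDerivAt (fun t : ℝ => ∑ i, (x + t • w) i ^ 4) (4 * ∑ i, x i ^ 3 * w i) 0 := by
  rw [Finset.mul_sum]
  refine HasDerivAt.fun_sum fun i _ => ?_
  simpa [mul_comm, mul_assoc, mul_left_comm] using
    (((hasDerivAt_id (0 : ℝ)).mul_const (w i)).const_add (x i)).fun_pow 4

lemma eq_zero_of_hasDerivAt_line {F : (n → ℝ) → ℝ} {x v : n → ℝ} (hmin : ∀ y, F x ≤ F y)
    (hderiv : ∀ w, HasDerivAt (fun t : ℝ => F (x + t • w)) (w ⬝ᵥ v) 0) : v = 0 := by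
  have hloc : IsLocalMin (fun t : ℝ => F (x + t • v)) 0 :=
    Filter.Eventually.of_forall fun t => by simpa using hmin (x + t • v)
  exact dotProduct_self_eq_zero.1 (hloc.hasDerivAt_eq_zero (hderiv v))

theorem mulVec_eq_smul_of_forall_le {A : Matrix n n ℝ} (hA : A.IsSymm) {ε : ℝ}
    (hmin : ∀ y, ε * (y ⬝ᵥ y) ≤ y ⬝ᵥ A *ᵥ y) {z : n → ℝ} (hz : z ⬝ᵥ A *ᵥ z ≤ ε * (z ⬝ᵥ z)) :
    A *ᵥ z = ε • z := by
  suffices h : (2 : ℝ) • (A *ᵥ z - ε • z) = 0 by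
    rwa [smul_eq_zero_iff_right two_ne_zero, sub_eq_zero] at h
  refine eq_zero_of_hasDerivAt_line (F := fun y => y ⬝ᵥ A *ᵥ y - ε * (y ⬝ᵥ y))
    (fun y => by linarith [hmin y]) fun w => ?_
  refine ((hasDerivAt_dotProduct_mulVec_line A z w).fun_sub
    ((hasDerivAt_dotProduct_self_line z w).const_mul ε)).congr_deriv ?_
  simp only [dotProduct_smul, dotProduct_sub, smul_eq_mul, dotProduct_mulVec_comm hA z w,
    dotProduct_comm z w]
  ring

end QuadraticForm

section MeanField

variable {n : Type*} [DecidableEq n]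

def meanField (A : Matrix n n ℝ) (K : ℝ) (x : n → ℝ) : Matrix n n ℝ :=
  A + diagonal fun i => 2 * K * x i ^ 2

@[simp]
lemma meanField_zero (A : Matrix n n ℝ) (x : n → ℝ) : meanField A 0 x = A := by
  simp [meanField]

lemma meanField_abs (A : Matrix n n ℝ) (K : ℝ) (x : n → ℝ) :
    meanField A K |x| = meanField A K x := by
  simp [meanField, Pi.abs_apply]

end MeanField

section Energy

variable {n : Type*} [Fintype n]

def energy (A : Matrix n n ℝ) (K : ℝ) (x : n → ℝ) : ℝ := x ⬝ᵥ A *ᵥ x + K * ∑ i, x i ^ 4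

lemma exists_isMinOn_energy [DecidableEq n] [Nonempty n] (A : Matrix n n ℝ) (K : ℝ) :
    ∃ x ∈ dotSphere n, IsMinOn (energy A K) (dotSphere n) x :=
  isCompact_dotSphere.exists_isMinOn dotSphere_nonempty
    (by unfold energy dotProduct mulVec dotProduct; fun_prop)

lemma energy_eq_trace (A : Matrix n n ℝ) (K : ℝ) (x : n → ℝ) :
    energy A K x = (A * vecMulVec x x).trace + K * ∑ i, vecMulVec x x i i ^ 2 := by
  simp only [energy, mul_vecMulVec, trace_vecMulVec, vecMulVec_apply, dotProduct_comm (A *ᵥ x)]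
  ring_nf

lemma energy_smul (A : Matrix n n ℝ) (K c : ℝ) (y : n → ℝ) :
    energy A K (c • y) = c ^ 2 * (y ⬝ᵥ A *ᵥ y) + c ^ 4 * (K * ∑ i, y i ^ 4) := by
  simp only [energy, mulVec_smul, dotProduct_smul, smul_dotProduct, smul_eq_mul, Pi.smul_apply,
    mul_pow, ← Finset.mul_sum]
  ring

lemma sum_abs_pow_four (x : n → ℝ) : ∑ i, |x| i ^ 4 = ∑ i, x i ^ 4 := by
  simp [Pi.abs_apply, Even.pow_abs ⟨2, rfl⟩]

lemma energy_abs_le {A : Matrix n n ℝ} (hA : ∀ i j, i ≠ j → A i j ≤ 0) (K : ℝ) (x : n → ℝ) :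
    energy A K |x| ≤ energy A K x := by
  simp only [energy, sum_abs_pow_four]
  exact add_le_add_left (abs_dotProduct_mulVec_abs_le hA x) _

lemma isMinOn_abs {A : Matrix n n ℝ} (hA : ∀ i j, i ≠ j → A i j ≤ 0) {K : ℝ} {x : n → ℝ}
    (hmin : IsMinOn (energy A K) (dotSphere n) x) : IsMinOn (energy A K) (dotSphere n) |x| :=
  fun _ hy => (energy_abs_le hA K x).trans (hmin hy)

lemma energy_mul_sq_le_of_isMinOn {A : Matrix n n ℝ} {K : ℝ} {x : n → ℝ}
    (hmin : IsMinOn (energy A K) (dotSphere n) x) (y : n → ℝ) :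
    energy A K x * (y ⬝ᵥ y) ^ 2 ≤ y ⬝ᵥ A *ᵥ y * (y ⬝ᵥ y) + K * ∑ i, y i ^ 4 := by
  rcases eq_or_ne y 0 with rfl | hy
  · simp
  have hs := dotProduct_self_pos hy
  have hle : energy A K x ≤ energy A K ((√(y ⬝ᵥ y))⁻¹ • y) :=
    hmin (inv_sqrt_smul_mem_dotSphere hy)
  rw [energy_smul, inv_pow, Real.sq_sqrt hs.le,
    show (√(y ⬝ᵥ y))⁻¹ ^ 4 = ((y ⬝ᵥ y) ^ 2)⁻¹ by
      rw [inv_pow, show 4 = 2 * 2 by rfl, pow_mul, Real.sq_sqrt hs.le]] at hle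
  calc energy A K x * (y ⬝ᵥ y) ^ 2
      ≤ ((y ⬝ᵥ y)⁻¹ * (y ⬝ᵥ A *ᵥ y) + ((y ⬝ᵥ y) ^ 2)⁻¹ * (K * ∑ i, y i ^ 4)) * (y ⬝ᵥ y) ^ 2 :=
        mul_le_mul_of_nonneg_right hle (sq_nonneg _)
    _ = y ⬝ᵥ A *ᵥ y * (y ⬝ᵥ y) + K * ∑ i, y i ^ 4 := by field_simp

lemma energy_mul_le_of_isMinOn {A : Matrix n n ℝ} {u : n → ℝ}
    (hmin : IsMinOn (energy A 0) (dotSphere n) u) (y : n → ℝ) :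
    energy A 0 u * (y ⬝ᵥ y) ≤ y ⬝ᵥ A *ᵥ y := by
  rcases eq_or_ne y 0 with rfl | hy
  · simp
  have := energy_mul_sq_le_of_isMinOn hmin y
  rw [zero_mul, add_zero, sq, ← mul_assoc] at this
  exact le_of_mul_le_mul_right this (dotProduct_self_pos hy)

variable [DecidableEq n]

lemma dotProduct_meanField_mulVec (A : Matrix n n ℝ) (K : ℝ) (x w : n → ℝ) :
    w ⬝ᵥ meanField A K x *ᵥ x = w ⬝ᵥ A *ᵥ x + 2 * K * ∑ i, x i ^ 3 * w i := by
  rw [meanField, add_mulVec, dotProduct_add]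
  congr 1
  simp only [dotProduct, mulVec_diagonal, Finset.mul_sum]
  exact Finset.sum_congr rfl fun i _ => by ring

theorem meanField_mulVec_eq_of_isMinOn {A : Matrix n n ℝ} (hA : A.IsSymm) {K : ℝ}
    {x : n → ℝ} (hx : x ∈ dotSphere n) (hmin : IsMinOn (energy A K) (dotSphere n) x) :
    meanField A K x *ᵥ x = (energy A K x + K * ∑ i, x i ^ 4) • x := by
  set e := energy A K x
  have hx1 : x ⬝ᵥ x = 1 := hx
  -- by homogeneity `x` minimizes `F` on the whole space, so its directional derivatives vanish
  let F : (n → ℝ) → ℝ := fun y =>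
    y ⬝ᵥ A *ᵥ y * (y ⬝ᵥ y) + K * ∑ i, y i ^ 4 - e * (y ⬝ᵥ y) ^ 2
  have hFx : F x = 0 := by
    simp only [F, hx1, e, energy]
    ring
  have hFmin : ∀ y, F x ≤ F y := fun y =>
    hFx ▸ sub_nonneg.2 (energy_mul_sq_le_of_isMinOn hmin y)
  suffices h : (2 : ℝ) • (meanField A K x *ᵥ x - (e + K * ∑ i, x i ^ 4) • x) = 0 by
    rwa [smul_eq_zero_iff_right two_ne_zero, sub_eq_zero] at h
  refine eq_zero_of_hasDerivAt_line hFmin fun w => ?_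
  have hS := hasDerivAt_dotProduct_self_line x w
  refine (((hasDerivAt_dotProduct_mulVec_line A x w).fun_mul hS).fun_add
    ((hasDerivAt_sum_pow_four_line x w).const_mul K) |>.fun_sub
    ((hS.fun_pow 2).const_mul e)).congr_deriv ?_
  simp only [dotProduct_smul, dotProduct_sub, dotProduct_meanField_mulVec, smul_eq_mul,
    zero_smul, add_zero, hx1, dotProduct_mulVec_comm hA x w, dotProduct_comm x w, e, energy]
  ring

end Energy

lemma Fin.add_one_ne_self {m : ℕ} [NeZero m] (hm : 1 < m) (i : Fin m) : i + 1 ≠ i :=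
  add_ne_left.2 fun h => by simpa [Nat.mod_eq_of_lt hm] using congrArg Fin.val h

open Fin.NatCast in
theorem cycle_induction {m : ℕ} [NeZero m] {p : Fin m → Prop} {i : Fin m} (hi : p i)
    (hstep : ∀ j, p j → p (j + 1)) (j : Fin m) : p j := by
  have h : ∀ k : ℕ, p (i + (k : Fin m)) := by
    intro k
    induction k with
    | zero => simpa using hi
    | succ k ih => simpa [Nat.cast_succ, ← add_assoc] using hstep _ ih
  simpa using h (j - i).val

/-- A Z-matrix whose off-diagonal sign pattern contains the cycle `0 → 1 → ⋯ → m - 1 → 0`; this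
is the irreducibility behind the Perron–Frobenius arguments. -/
structure IsCyclicZMatrix {m : ℕ} [NeZero m] (A : Matrix (Fin m) (Fin m) ℝ) : Prop where
  offDiag_nonpos : ∀ i j, i ≠ j → A i j ≤ 0
  add_one_neg : ∀ i, A i (i + 1) < 0

namespace IsCyclicZMatrix

variable {m : ℕ} [NeZero m] {A : Matrix (Fin m) (Fin m) ℝ}

lemma add_diagonal (hA : IsCyclicZMatrix A) (hm : 1 < m) (d : Fin m → ℝ) :
    IsCyclicZMatrix (A + diagonal d) := by
  refine ⟨fun i j hij => ?_, fun i => ?_⟩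
  · simpa [diagonal_apply_ne d hij] using hA.offDiag_nonpos i j hij
  · simpa [diagonal_apply_ne' d (Fin.add_one_ne_self hm i)] using hA.add_one_neg i

lemma eq_zero_of_nonneg (hA : IsCyclicZMatrix A) {x : Fin m → ℝ} {μ : ℝ} (hx : 0 ≤ x)
    (heig : A *ᵥ x = μ • x) {i : Fin m} (hi : x i = 0) : x = 0 := by
  refine funext (cycle_induction (p := fun j => x j = 0) hi fun j (hj : x j = 0) => ?_)
  have hterm : ∀ l ∈ Finset.univ, A j l * x l ≤ 0 := fun l _ => by
    rcases eq_or_ne j l with rfl | hjl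
    · rw [hj, mul_zero]
    · exact mul_nonpos_of_nonpos_of_nonneg (hA.offDiag_nonpos j l hjl) (hx l)
  have hrow : ∑ l, A j l * x l = 0 := by
    simpa [mulVec, dotProduct, hj] using congrFun heig j
  have := (Finset.sum_eq_zero_iff_of_nonpos hterm).1 hrow (j + 1) (Finset.mem_univ _)
  exact (mul_eq_zero.1 this).resolve_left (hA.add_one_neg j).ne

lemma pos_of_nonneg (hA : IsCyclicZMatrix A) {x : Fin m → ℝ} {μ : ℝ} (hx : 0 ≤ x)
    (hx0 : x ≠ 0) (heig : A *ᵥ x = μ • x) (i : Fin m) : 0 < x i :=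
  lt_of_le_of_ne (hx i) fun hi => hx0 (hA.eq_zero_of_nonneg hx heig hi.symm)

lemma eq_abs_or_eq_neg_abs (hA : IsCyclicZMatrix A) {x : Fin m → ℝ} {μ : ℝ}
    (heig : A *ᵥ x = μ • x) (heig_abs : A *ᵥ |x| = μ • |x|) : x = |x| ∨ x = -|x| := by
  by_cases hx : 0 ≤ x
  · exact Or.inl (abs_of_nonneg hx).symm
  right
  obtain ⟨j, hj⟩ : ∃ j, x j < 0 := by simpa [Pi.le_def] using hx
  have hsum : |x| + x = 0 := by
    refine hA.eq_zero_of_nonneg (fun i => ?_) (by rw [mulVec_add, heig, heig_abs, smul_add])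
      (i := j) ?_
    · simpa [neg_le_iff_add_nonneg'] using neg_abs_le (x i)
    · simp [abs_of_neg hj]
  exact eq_neg_of_add_eq_zero_right hsum

theorem le_dotProduct_mulVec (hA : IsCyclicZMatrix A) (hs : A.IsSymm) {φ : Fin m → ℝ}
    (hφ : ∀ i, 0 < φ i) {ε : ℝ} (heig : A *ᵥ φ = ε • φ) (y : Fin m → ℝ) :
    ε * (y ⬝ᵥ y) ≤ y ⬝ᵥ A *ᵥ y := by
  obtain ⟨u, hu, hmin⟩ := exists_isMinOn_energy A 0
  have hmin_abs := isMinOn_abs hA.offDiag_nonpos hmin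
  have heig_abs : A *ᵥ |u| = energy A 0 |u| • |u| := by
    simpa using meanField_mulVec_eq_of_isMinOn hs (abs_mem_dotSphere hu) hmin_abs
  have hpos : 0 < φ ⬝ᵥ |u| :=
    dotProduct_pos_of_pos hφ (abs_nonneg u) (ne_zero_of_mem_dotSphere (abs_mem_dotSphere hu))
  have hε : energy A 0 |u| = ε := by
    refine mul_right_cancel₀ hpos.ne' ?_
    rw [← smul_eq_mul, ← dotProduct_smul, ← heig_abs, dotProduct_mulVec_comm hs, heig,
      dotProduct_smul, smul_eq_mul, dotProduct_comm]
  simpa [hε] using energy_mul_le_of_isMinOn hmin_abs y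

theorem eq_smul_of_mulVec_eq_smul (hA : IsCyclicZMatrix A) (hs : A.IsSymm) {φ : Fin m → ℝ}
    (hφ1 : φ ∈ dotSphere (Fin m)) (hφ : ∀ i, 0 < φ i) {ε : ℝ} (heig : A *ᵥ φ = ε • φ)
    {v : Fin m → ℝ} (hv : A *ᵥ v = ε • v) : ∃ c : ℝ, v = c • φ := by
  set w := v - (v ⬝ᵥ φ) • φ with hw_def
  have hw : A *ᵥ w = ε • w := by
    rw [hw_def, mulVec_sub, mulVec_smul, hv, heig, smul_sub, smul_comm]
  have hwφ : φ ⬝ᵥ w = 0 := by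
    rw [hw_def, dotProduct_sub, dotProduct_smul, (hφ1 : φ ⬝ᵥ φ = 1), dotProduct_comm,
      smul_eq_mul, mul_one, sub_self]
  have hw_abs : A *ᵥ |w| = ε • |w| := by
    refine mulVec_eq_smul_of_forall_le hs (hA.le_dotProduct_mulVec hs hφ heig) ?_
    rw [abs_dotProduct_abs]
    calc |w| ⬝ᵥ A *ᵥ |w| ≤ w ⬝ᵥ A *ᵥ w := abs_dotProduct_mulVec_abs_le hA.offDiag_nonpos w
      _ = ε * (w ⬝ᵥ w) := by rw [hw, dotProduct_smul, smul_eq_mul]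
  have habs : φ ⬝ᵥ |w| = 0 := by
    rcases hA.eq_abs_or_eq_neg_abs hw hw_abs with h | h
    · rwa [← h]
    · rwa [h, dotProduct_neg, neg_eq_zero] at hwφ
  have hw0 : w = 0 := by
    by_contra hw0
    refine (dotProduct_pos_of_pos hφ (abs_nonneg w) fun h => hw0 (funext fun i => ?_)).ne' habs
    simpa using congrFun h i
  exact ⟨v ⬝ᵥ φ, sub_eq_zero.1 hw0⟩

end IsCyclicZMatrix

section QuadMean

variable {n : Type*}

noncomputable def quadMean (φ ρ : n → ℝ) : n → ℝ := fun i => √((φ i ^ 2 + ρ i ^ 2) / 2)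

lemma quadMean_mul_self (φ ρ : n → ℝ) (i : n) :
    quadMean φ ρ i * quadMean φ ρ i = (φ i ^ 2 + ρ i ^ 2) / 2 :=
  Real.mul_self_sqrt (by positivity)

lemma quadMean_mul_quadMean (φ ρ : n → ℝ) (i j : n) :
    quadMean φ ρ i * quadMean φ ρ j =
      √(((φ i * φ j + ρ i * ρ j) / 2) ^ 2 + ((φ i * ρ j - ρ i * φ j) / 2) ^ 2) := by
  rw [quadMean, quadMean, ← Real.sqrt_mul (by positivity)]
  ring_nf

lemma le_quadMean_mul_quadMean (φ ρ : n → ℝ) (i j : n) :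
    (φ i * φ j + ρ i * ρ j) / 2 ≤ quadMean φ ρ i * quadMean φ ρ j := by
  rw [quadMean_mul_quadMean]
  exact Real.le_sqrt_of_sq_le (le_add_of_nonneg_right (sq_nonneg _))

lemma mul_eq_mul_of_quadMean_mul_quadMean_eq {φ ρ : n → ℝ} {i j : n}
    (h : quadMean φ ρ i * quadMean φ ρ j = (φ i * φ j + ρ i * ρ j) / 2) :
    φ i * ρ j = ρ i * φ j := by
  rw [quadMean_mul_quadMean] at h
  have hsq := congrArg (· ^ 2) h
  rw [Real.sq_sqrt (by positivity), add_eq_left] at hsq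
  linarith [pow_eq_zero_iff (n := 2) two_ne_zero |>.1 hsq]

variable [Fintype n]

lemma quadMean_mem_dotSphere {φ ρ : n → ℝ} (hφ : φ ∈ dotSphere n) (hρ : ρ ∈ dotSphere n) :
    quadMean φ ρ ∈ dotSphere n := by
  have hφ1 : ∑ i, φ i * φ i = 1 := hφ
  have hρ1 : ∑ i, ρ i * ρ i = 1 := hρ
  show ∑ i, quadMean φ ρ i * quadMean φ ρ i = 1
  simp only [quadMean_mul_self, ← Finset.sum_div, Finset.sum_add_distrib, sq, hφ1, hρ1]
  norm_num

lemma sum_quadMean_pow_four_le (φ ρ : n → ℝ) :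
    ∑ i, quadMean φ ρ i ^ 4 ≤ (∑ i, φ i ^ 4 + ∑ i, ρ i ^ 4) / 2 := by
  rw [← Finset.sum_add_distrib, Finset.sum_div]
  refine Finset.sum_le_sum fun i _ => ?_
  rw [show 4 = 2 * 2 by rfl, pow_mul, sq (quadMean φ ρ i), quadMean_mul_self]
  nlinarith [sq_nonneg (φ i ^ 2 - ρ i ^ 2)]

lemma dotProduct_mulVec_quadMean_add (A : Matrix n n ℝ) (φ ρ : n → ℝ) :
    quadMean φ ρ ⬝ᵥ A *ᵥ quadMean φ ρ + ∑ i, ∑ j, -A i j *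
        (quadMean φ ρ i * quadMean φ ρ j - (φ i * φ j + ρ i * ρ j) / 2) =
      (φ ⬝ᵥ A *ᵥ φ + ρ ⬝ᵥ A *ᵥ ρ) / 2 := by
  simp only [dotProduct_mulVec_eq_sum, ← Finset.sum_add_distrib, Finset.sum_div]
  exact Finset.sum_congr rfl fun i _ => Finset.sum_congr rfl fun j _ => by ring

end QuadMean

namespace IsCyclicZMatrix

variable {m : ℕ} [NeZero m] {A : Matrix (Fin m) (Fin m) ℝ}

theorem mul_eq_mul_of_isMinOn (hA : IsCyclicZMatrix A) {K : ℝ} (hK : 0 ≤ K)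
    {φ ρ : Fin m → ℝ} (hφ : φ ∈ dotSphere (Fin m)) (hρ : ρ ∈ dotSphere (Fin m))
    (hφmin : IsMinOn (energy A K) (dotSphere (Fin m)) φ)
    (hρmin : IsMinOn (energy A K) (dotSphere (Fin m)) ρ) (j : Fin m) :
    φ j * ρ (j + 1) = ρ j * φ (j + 1) := by
  set χ := quadMean φ ρ
  set f : Fin m → Fin m → ℝ := fun i j => -A i j * (χ i * χ j - (φ i * φ j + ρ i * ρ j) / 2)
  have hf : ∀ i j, 0 ≤ f i j := fun i j => by
    rcases eq_or_ne i j with rfl | hij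
    · simp only [f, χ, quadMean_mul_self]
      exact le_of_eq (by ring)
    · exact mul_nonneg (neg_nonneg.2 (hA.offDiag_nonpos i j hij))
        (sub_nonneg.2 (le_quadMean_mul_quadMean φ ρ i j))
  have hsum : ∑ i, ∑ j, f i j ≤ 0 := by
    have hχ : energy A K φ ≤ energy A K χ := hφmin (quadMean_mem_dotSphere hφ hρ)
    have hφρ : energy A K φ ≤ energy A K ρ := hφmin hρ
    have hρφ : energy A K ρ ≤ energy A K φ := hρmin hφ
    have hquad := dotProduct_mulVec_quadMean_add A φ ρ
    have hquart := mul_le_mul_of_nonneg_left (sum_quadMean_pow_four_le φ ρ) hK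
    simp only [energy] at hχ hφρ hρφ
    linarith
  have hrows := (Finset.sum_eq_zero_iff_of_nonneg fun i _ => Finset.sum_nonneg fun l _ => hf i l).1
    (le_antisymm hsum (Finset.sum_nonneg fun i _ => Finset.sum_nonneg fun l _ => hf i l))
  have hzero : f j (j + 1) = 0 := (Finset.sum_eq_zero_iff_of_nonneg fun l _ => hf j l).1
    (hrows j (Finset.mem_univ j)) (j + 1) (Finset.mem_univ _)
  refine mul_eq_mul_of_quadMean_mul_quadMean_eq (sub_eq_zero.1 ?_)
  exact (mul_eq_zero.1 hzero).resolve_left (neg_ne_zero.2 (hA.add_one_neg j).ne)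

end IsCyclicZMatrix

theorem eq_of_mul_eq_mul_add_one {m : ℕ} [NeZero m] {φ ρ : Fin m → ℝ}
    (hφ1 : φ ∈ dotSphere (Fin m)) (hρ1 : ρ ∈ dotSphere (Fin m)) (hφ : ∀ i, 0 < φ i)
    (hρ : ∀ i, 0 < ρ i) (hcross : ∀ j, φ j * ρ (j + 1) = ρ j * φ (j + 1)) : ρ = φ := by
  set t := ρ 0 / φ 0
  have hprop : ρ = t • φ := funext <| cycle_induction (p := fun j => ρ j = t * φ j) (i := 0)
    (div_mul_cancel₀ _ (hφ 0).ne').symm fun j (hj : ρ j = t * φ j) => by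
      refine mul_left_cancel₀ (hφ j).ne' ?_
      rw [hcross, hj]
      ring
  have ht : t ^ 2 = 1 := by
    have h : ρ ⬝ᵥ ρ = 1 := hρ1
    rwa [hprop, smul_dotProduct, dotProduct_smul, (hφ1 : φ ⬝ᵥ φ = 1), smul_eq_mul, smul_eq_mul,
      mul_one, ← sq] at h
  have ht1 : t = 1 := by
    nlinarith [div_pos (hρ 0) (hφ 0)]
  rw [hprop, ht1, one_smul]

section Minimizers

variable {m : ℕ} [NeZero m] {A : Matrix (Fin m) (Fin m) ℝ}

lemma IsCyclicZMatrix.meanField (hA : IsCyclicZMatrix A) (hm : 1 < m) (K : ℝ)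
    (x : Fin m → ℝ) : IsCyclicZMatrix (meanField A K x) :=
  hA.add_diagonal hm _

lemma pos_of_isMinOn_energy (hA : IsCyclicZMatrix A) (hs : A.IsSymm) (hm : 1 < m) {K : ℝ}
    {x : Fin m → ℝ} (hx : x ∈ dotSphere (Fin m)) (hmin : IsMinOn (energy A K) (dotSphere (Fin m)) x)
    (hx0 : 0 ≤ x) (i : Fin m) : 0 < x i :=
  (hA.meanField hm K x).pos_of_nonneg hx0 (ne_zero_of_mem_dotSphere hx)
    (meanField_mulVec_eq_of_isMinOn hs hx hmin) i

theorem exists_pos_isMinOn_energy (hA : IsCyclicZMatrix A) (hs : A.IsSymm) (hm : 1 < m)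
    (K : ℝ) : ∃ φ ∈ dotSphere (Fin m), (∀ i, 0 < φ i) ∧
      IsMinOn (energy A K) (dotSphere (Fin m)) φ := by
  obtain ⟨φ, hφ, hmin⟩ := exists_isMinOn_energy A K
  have hmin_abs := isMinOn_abs hA.offDiag_nonpos hmin
  exact ⟨|φ|, abs_mem_dotSphere hφ,
    pos_of_isMinOn_energy hA hs hm (abs_mem_dotSphere hφ) hmin_abs (abs_nonneg φ), hmin_abs⟩

theorem vecMulVec_eq_of_isMinOn_energy (hA : IsCyclicZMatrix A) (hs : A.IsSymm) (hm : 1 < m)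
    {K : ℝ} (hK : 0 ≤ K) {φ ψ : Fin m → ℝ} (hφ : φ ∈ dotSphere (Fin m)) (hφpos : ∀ i, 0 < φ i)
    (hφmin : IsMinOn (energy A K) (dotSphere (Fin m)) φ) (hψ : ψ ∈ dotSphere (Fin m))
    (hψmin : IsMinOn (energy A K) (dotSphere (Fin m)) ψ) : vecMulVec ψ ψ = vecMulVec φ φ := by
  have hψ_abs := abs_mem_dotSphere hψ
  have hmin_abs := isMinOn_abs hA.offDiag_nonpos hψmin
  have habs : |ψ| = φ := eq_of_mul_eq_mul_add_one hφ hψ_abs hφpos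
    (pos_of_isMinOn_energy hA hs hm hψ_abs hmin_abs (abs_nonneg ψ))
    (hA.mul_eq_mul_of_isMinOn hK hφ hψ_abs hφmin hmin_abs)
  have heig := meanField_mulVec_eq_of_isMinOn hs hψ hψmin
  have heig_abs := meanField_mulVec_eq_of_isMinOn hs hψ_abs hmin_abs
  rw [meanField_abs, sum_abs_pow_four,
    le_antisymm (energy_abs_le hA.offDiag_nonpos K ψ) (hψmin hψ_abs)] at heig_abs
  rcases (hA.meanField hm K ψ).eq_abs_or_eq_neg_abs heig heig_abs with h | h
  · rw [h, habs]
  · rw [h, habs, neg_vecMulVec, vecMulVec_neg, neg_neg]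

theorem exists_lowest_simple_eigenvalue_meanField (hA : IsCyclicZMatrix A) (hs : A.IsSymm)
    (hm : 1 < m) {K : ℝ} {φ : Fin m → ℝ} (hφ : φ ∈ dotSphere (Fin m)) (hφpos : ∀ i, 0 < φ i)
    (hφmin : IsMinOn (energy A K) (dotSphere (Fin m)) φ) :
    ∃ ε : ℝ, meanField A K φ *ᵥ φ = ε • φ ∧
      (∀ (μ : ℝ) (v : Fin m → ℝ), v ≠ 0 → meanField A K φ *ᵥ v = μ • v → ε ≤ μ) ∧
      (∀ v : Fin m → ℝ, meanField A K φ *ᵥ v = ε • v → ∃ c : ℝ, v = c • φ) := by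
  have hH := hA.meanField hm K φ
  have hHs : (meanField A K φ).IsSymm := hs.add (isSymm_diagonal _)
  have heig := meanField_mulVec_eq_of_isMinOn hs hφ hφmin
  refine ⟨_, heig, fun μ v hv hμ => ?_,
    fun v hv => hH.eq_smul_of_mulVec_eq_smul hHs hφ hφpos heig hv⟩
  have := hH.le_dotProduct_mulVec hHs hφpos heig v
  rw [hμ, dotProduct_smul, smul_eq_mul] at this
  exact le_of_mul_le_mul_right this (dotProduct_self_pos hv)

end Minimizers

noncomputable def fdHamiltonian {m : ℕ} (V : Fin m → ℝ) (δ : ℝ) : Matrix (Fin m) (Fin m) ℝ :=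
  Matrix.of fun i j =>
    if i = j then 1 / δ ^ 2 + V i
    else if (i.val + 1) % m = j.val ∨ (j.val + 1) % m = i.val then -(1 / (2 * δ ^ 2))
    else 0

lemma fdHamiltonian_isSymm {m : ℕ} (V : Fin m → ℝ) (δ : ℝ) : (fdHamiltonian V δ).IsSymm := by
  ext i j
  simp only [fdHamiltonian, transpose_apply, of_apply]
  by_cases hij : i = j
  · subst hij; rfl
  · simp [hij, Ne.symm hij, or_comm]

lemma isCyclicZMatrix_fdHamiltonian {m : ℕ} [NeZero m] (hm : 1 < m) (V : Fin m → ℝ) {δ : ℝ}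
    (hδ : δ ≠ 0) : IsCyclicZMatrix (fdHamiltonian V δ) := by
  have hc : 0 < 1 / (2 * δ ^ 2) := by positivity
  refine ⟨fun i j hij => ?_, fun i => ?_⟩
  · simp only [fdHamiltonian, of_apply, if_neg hij]
    split_ifs <;> linarith
  · have hval : (i.val + 1) % m = (i + 1).val := by simp [Fin.val_add]
    simp only [fdHamiltonian, of_apply, if_neg (Fin.add_one_ne_self hm i).symm, hval, true_or,
      if_true]
    linarith

end GrossPitaevskii

open GrossPitaevskii

/-- the discretized 1D periodic Gross–Pitaevskii model with `N = 1`.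
The energy `E_α(P) = Tr(hP) + (α/2)δ⁻¹ Σᵢ Pᵢᵢ²`, where `h` is the periodic
second-order finite-difference matrix with potential `V`, has a unique minimizer `P*`
over `𝓜₁`; moreover `P* = φ*φ*ᵀ` with `φ*` a positive unit vector, and `P*` satisfies
the strong Aufbau principle: `φ*` is an eigenvector of the mean-field Hamiltonian
`H* = ∇E_α(P*) = h + αδ⁻¹Diag(P*ᵢᵢ)` associated with its lowest eigenvalue, which is
simple. -/
theorem gross_pitaevskii_N1_unique_minimizer_aufbau
    {Nb : ℕ} (hNb : 3 ≤ Nb) (V : Fin Nb → ℝ) (α : ℝ) (hα : 0 ≤ α) :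
    let δ : ℝ := 1 / Nb
    let h : Matrix (Fin Nb) (Fin Nb) ℝ := Matrix.of fun i j =>
      if i = j then 1 / δ ^ 2 + V i
      else if (i.val + 1) % Nb = j.val ∨ (j.val + 1) % Nb = i.val then -(1 / (2 * δ ^ 2))
      else 0
    let Eα : Matrix (Fin Nb) (Fin Nb) ℝ → ℝ := fun P =>
      (h * P).trace + α / 2 * δ⁻¹ * ∑ i, P i i ^ 2
    let M1 : Set (Matrix (Fin Nb) (Fin Nb) ℝ) :=
      {P | P.IsSymm ∧ P * P = P ∧ P.trace = 1}
    ∃ Pstar ∈ M1,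
      (∀ Q ∈ M1, Eα Pstar ≤ Eα Q) ∧
      (∀ Q ∈ M1, (∀ Q' ∈ M1, Eα Q ≤ Eα Q') → Q = Pstar) ∧
      ∃ φ : Fin Nb → ℝ, φ ⬝ᵥ φ = 1 ∧ (∀ i, 0 < φ i) ∧ Pstar = vecMulVec φ φ ∧
        ∃ ε1 : ℝ,
          (h + Matrix.diagonal fun i => α * δ⁻¹ * Pstar i i).mulVec φ = ε1 • φ ∧
          (∀ (μ : ℝ) (v : Fin Nb → ℝ), v ≠ 0 →
            (h + Matrix.diagonal fun i => α * δ⁻¹ * Pstar i i).mulVec v = μ • v → ε1 ≤ μ) ∧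
          (∀ v : Fin Nb → ℝ,
            (h + Matrix.diagonal fun i => α * δ⁻¹ * Pstar i i).mulVec v = ε1 • v →
              ∃ cc : ℝ, v = cc • φ) := by
  intro δ h Eα M1
  have : NeZero Nb := ⟨by omega⟩
  have hm : 1 < Nb := by omega
  have hδ : δ ≠ 0 := by positivity
  set K := α / 2 * δ⁻¹ with hK_def
  have hK : 0 ≤ K := by positivity
  have hA : IsCyclicZMatrix h := isCyclicZMatrix_fdHamiltonian hm V hδ
  have hs : h.IsSymm := fdHamiltonian_isSymm V δ
  have hM1 (P : Matrix (Fin Nb) (Fin Nb) ℝ) : P ∈ M1 ↔ ∃ φ ∈ dotSphere (Fin Nb), P = vecMulVec φ φ :=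
    isSymm_mul_self_trace_eq_one_iff
  have hE (φ : Fin Nb → ℝ) : Eα (vecMulVec φ φ) = energy h K φ := (energy_eq_trace h K φ).symm
  have hH (φ : Fin Nb → ℝ) : h + diagonal (fun i => α * δ⁻¹ * vecMulVec φ φ i i) = meanField h K φ := by
    simp only [meanField, vecMulVec_apply, hK_def]
    congr 2
    ext i
    ring
  obtain ⟨φ, hφ, hpos, hmin⟩ := exists_pos_isMinOn_energy hA hs hm K
  refine ⟨vecMulVec φ φ, (hM1 _).2 ⟨φ, hφ, rfl⟩, fun Q hQ => ?_, fun Q hQ hQmin => ?_,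
    φ, hφ, hpos, rfl, ?_⟩
  · obtain ⟨ψ, hψ, rfl⟩ := (hM1 Q).1 hQ
    rw [hE, hE]
    exact hmin hψ
  · obtain ⟨ψ, hψ, rfl⟩ := (hM1 Q).1 hQ
    refine vecMulVec_eq_of_isMinOn_energy hA hs hm hK hφ hpos hmin hψ fun y hy => ?_
    have := hQmin _ ((hM1 _).2 ⟨y, hy, rfl⟩)
    rwa [hE, hE] at this
  · rw [hH]
    exact exists_lowest_simple_eigenvalue_meanField hA hs hm hφ hpos hmin
end

section
/- Let E : 𝓗 → ℝ be C² with ∇²E(P*) positive semidefinite as a quadratic form on 𝓗 (i.e. ⟨Y, ∇²E(P*)Y⟩ ≥ 0 for all Y ∈ 𝓗). Let P* ∈ 𝓜_N be a critical point ([H*, P*] = 0, where H* = ∇E(P*)) satisfying the strong Aufbau principle: P* is the orthogonal projector onto the span of eigenvectors of H* associated with its N lowest eigenvalues ε_1 ≤ … ≤ ε_N, and the gap ν = ε_{N+1} − ε_N is strictly positive. Then ⟨X, (Ω* + K*)X⟩ ≥ ν‖X‖_F² for all X ∈ T_{P*}𝓜_N; in particular P* satisfies the second-order optimality condition. -/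
open Matrix Filter Topology
open scoped BigOperators

attribute [local instance] Matrix.normedAddCommGroup Matrix.normedSpace

noncomputable section

section helpers
variable {n : ℕ}

lemma mul_vecMulVec' (A : Mat n) (a b : Fin n → ℝ) :
    A * vecMulVec a b = vecMulVec (A.mulVec a) b := by
  ext i j
  simp [Matrix.mul_apply, Matrix.vecMulVec_apply, Matrix.mulVec, dotProduct,
    Finset.sum_mul, mul_assoc]

lemma smul_vecMulVec (c : ℝ) (a b : Fin n → ℝ) :
    vecMulVec (c • a) b = c • vecMulVec a b := by
  ext i j
  simp [Matrix.vecMulVec_apply, mul_assoc]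

lemma trace_mul_vecMulVec (A : Mat n) (a : Fin n → ℝ) :
    (A * vecMulVec a a).trace = a ⬝ᵥ A.mulVec a := by
  simp only [Matrix.trace, Matrix.diag, Matrix.mul_apply, Matrix.vecMulVec_apply,
    dotProduct, Matrix.mulVec]
  refine Finset.sum_congr rfl fun i _ => ?_
  rw [Finset.mul_sum]
  refine Finset.sum_congr rfl fun j _ => by ring

lemma sum_vecMulVec_eq_one (φ : Fin n → Fin n → ℝ)
    (hortho : ∀ k l, φ k ⬝ᵥ φ l = if k = l then (1:ℝ) else 0) :
    ∑ k, vecMulVec (φ k) (φ k) = 1 := by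
  set U : Mat n := Matrix.of (fun k i => φ k i) with hU
  have h1 : U * Uᵀ = 1 := by
    ext k l
    simpa [hU, Matrix.mul_apply, dotProduct, Matrix.one_apply] using hortho k l
  have h2 : Uᵀ * U = 1 := mul_eq_one_comm.mp h1
  ext i j
  calc (∑ k, vecMulVec (φ k) (φ k)) i j
      = (Uᵀ * U) i j := by
        simp [Matrix.sum_apply, Matrix.vecMulVec_apply, Matrix.mul_apply, hU, mul_comm]
    _ = (1 : Mat n) i j := by rw [h2]

lemma quad_nonneg (B : Mat n) (a : Fin n → ℝ) : 0 ≤ a ⬝ᵥ (Bᵀ * B).mulVec a := by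
  have h : a ⬝ᵥ (Bᵀ * B).mulVec a = (B.mulVec a) ⬝ᵥ (B.mulVec a) := by
    rw [← Matrix.mulVec_mulVec, Matrix.dotProduct_mulVec, Matrix.vecMul_transpose]
  rw [h]
  exact Finset.sum_nonneg fun i _ => mul_self_nonneg _

lemma trace_transpose_mul_self_nonneg_s19 (A : Mat n) : 0 ≤ (Aᵀ * A).trace := by
  simp only [Matrix.trace, Matrix.diag, Matrix.mul_apply, Matrix.transpose_apply]
  exact Finset.sum_nonneg fun i _ => Finset.sum_nonneg fun j _ => mul_self_nonneg _

lemma trace_mul_psdsum_nonneg (B : Mat n) (s : Finset (Fin n)) (c : Fin n → ℝ)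
    (hc : ∀ a ∈ s, 0 ≤ c a) (φ : Fin n → Fin n → ℝ) :
    0 ≤ ((Bᵀ * B) * (∑ a ∈ s, c a • vecMulVec (φ a) (φ a))).trace := by
  rw [Finset.mul_sum, Matrix.trace_sum]
  refine Finset.sum_nonneg fun a ha => ?_
  rw [Matrix.mul_smul, Matrix.trace_smul, smul_eq_mul, trace_mul_vecMulVec]
  exact mul_nonneg (hc a ha) (quad_nonneg B (φ a))

end helpers

/-- if `∇²E(P*)` is positive semidefinite on `𝓗` and `P*` is a critical
point satisfying the strong Aufbau principle with gap `ν = ε_{N+1} − ε_N > 0`, then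
`⟨X, (Ω* + K*)X⟩ ≥ ν‖X‖_F²` for all tangent `X`; in particular `P*` satisfies the
second-order optimality condition. -/
theorem gap_implies_second_order_condition {Nb N : ℕ} (hN : 0 < N) (hNNb : N < Nb)
    (E : Mat Nb → ℝ) (hE : ContDiff ℝ 2 E)
    (Pstar Hstar : Mat Nb)
    (hPmem : Pstar ∈ projSet Nb N) (hHsym : Hstar.IsSymm)
    (hgrad : ∀ X : Mat Nb, X.IsSymm → fderiv ℝ E Pstar X = (Hstar * X).trace)
    (hcrit : Hstar * Pstar - Pstar * Hstar = 0)
    (hess : Mat Nb →ₗ[ℝ] Mat Nb)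
    (hesssym : ∀ X : Mat Nb, X.IsSymm → (hess X).IsSymm)
    (hhess : ∀ X Y : Mat Nb, X.IsSymm → Y.IsSymm →
      iteratedFDeriv ℝ 2 E Pstar ![X, Y] = frobInner (hess X) Y)
    (hesspsd : ∀ Y : Mat Nb, Y.IsSymm → 0 ≤ frobInner Y (hess Y))
    (eps : Fin Nb → ℝ) (φ : Fin Nb → Fin Nb → ℝ)
    (hmono : Monotone eps)
    (hortho : ∀ k l : Fin Nb, φ k ⬝ᵥ φ l = if k = l then (1 : ℝ) else 0)
    (heig : ∀ k : Fin Nb, Hstar.mulVec (φ k) = eps k • φ k)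
    (hProj : Pstar = ∑ i ∈ Finset.univ.filter (fun i : Fin Nb => i.val < N),
      vecMulVec (φ i) (φ i))
    (ν : ℝ) (hν : ν = eps ⟨N, hNNb⟩ - eps ⟨N - 1, by omega⟩) (hνpos : 0 < ν) :
    ∀ X ∈ tangentSet Pstar,
      ν * frobNorm X ^ 2 ≤
        frobInner X (OmegaOp Pstar Hstar X + piT Pstar (hess (piT Pstar X))) := by
  obtain ⟨hPs, hPP, -⟩ := hPmem
  have hPsT : Pstarᵀ = Pstar := hPs
  have hHP : Hstar * Pstar = Pstar * Hstar := sub_eq_zero.mp hcrit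
  have hNm : N - 1 < Nb := by omega
  have hν' : ν = eps ⟨N, hNNb⟩ - eps ⟨N - 1, hNm⟩ := hν
  intro X hX
  obtain ⟨hXs, hXt, -⟩ := hX
  have hXsT : Xᵀ = X := hXs
  -- basic projector algebra
  have hPXP : Pstar * X * Pstar = 0 := by
    have h := congrArg (fun M => Pstar * M) hXt
    simp only [mul_add, ← mul_assoc, hPP] at h
    have h' : Pstar * X + Pstar * X * Pstar = Pstar * X + 0 := by simpa using h
    exact add_left_cancel h'
  have hQX : (1 - Pstar) * X = X * Pstar := by
    rw [sub_mul, one_mul, sub_eq_iff_eq_add']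
    exact hXt.symm
  have hXQ : X * (1 - Pstar) = Pstar * X := by
    rw [mul_sub, mul_one, sub_eq_iff_eq_add]
    exact hXt.symm
  -- spectral sums
  set S : Finset (Fin Nb) := Finset.univ.filter (fun i : Fin Nb => i.val < N) with hS
  set T : Finset (Fin Nb) := Finset.univ.filter (fun i : Fin Nb => ¬ i.val < N) with hT
  have hone : ∑ k, vecMulVec (φ k) (φ k) = 1 := sum_vecMulVec_eq_one φ hortho
  have hsplitsum : ∑ i ∈ S, vecMulVec (φ i) (φ i) + ∑ a ∈ T, vecMulVec (φ a) (φ a) = 1 := by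
    rw [← hone]
    exact Finset.sum_filter_add_sum_filter_not _ _ _
  have hQsum : 1 - Pstar = ∑ a ∈ T, vecMulVec (φ a) (φ a) := by
    rw [hProj, sub_eq_iff_eq_add']
    exact hsplitsum.symm
  have hHPsum : Hstar * Pstar = ∑ i ∈ S, eps i • vecMulVec (φ i) (φ i) := by
    rw [hProj, Finset.mul_sum]
    exact Finset.sum_congr rfl fun i _ => by rw [mul_vecMulVec', heig, smul_vecMulVec]
  have hHQsum : Hstar * (1 - Pstar) = ∑ a ∈ T, eps a • vecMulVec (φ a) (φ a) := by
    rw [hQsum, Finset.mul_sum]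
    exact Finset.sum_congr rfl fun a _ => by rw [mul_vecMulVec', heig, smul_vecMulVec]
  have hM1 : Hstar * (1 - Pstar) - eps ⟨N, hNNb⟩ • (1 - Pstar)
      = ∑ a ∈ T, (eps a - eps ⟨N, hNNb⟩) • vecMulVec (φ a) (φ a) := by
    rw [hHQsum, hQsum, Finset.smul_sum, ← Finset.sum_sub_distrib]
    exact Finset.sum_congr rfl fun a _ => (sub_smul _ _ _).symm
  have hM2 : eps ⟨N - 1, hNm⟩ • Pstar - Hstar * Pstar
      = ∑ i ∈ S, (eps ⟨N - 1, hNm⟩ - eps i) • vecMulVec (φ i) (φ i) := by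
    rw [hHPsum, hProj, Finset.smul_sum, ← Finset.sum_sub_distrib]
    exact Finset.sum_congr rfl fun i _ => (sub_smul _ _ _).symm
  -- monotonicity of eigenvalues
  have hc1 : ∀ a ∈ T, 0 ≤ eps a - eps ⟨N, hNNb⟩ := by
    intro a ha
    have hmem := Finset.mem_filter.mp ha
    have hle : N ≤ a.val := by omega
    exact sub_nonneg.mpr (hmono (Fin.le_def.mpr hle))
  have hc2 : ∀ i ∈ S, 0 ≤ eps ⟨N - 1, hNm⟩ - eps i := by
    intro i hi
    have hmem := Finset.mem_filter.mp hi
    have hle : i.val ≤ N - 1 := by omega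
    exact sub_nonneg.mpr (hmono (Fin.le_def.mpr hle))
  -- PSD factorizations
  have hA1 : X * Pstar * X = (Pstar * X)ᵀ * (Pstar * X) := by
    rw [Matrix.transpose_mul, hXsT, hPsT]
    simp only [← mul_assoc]
    rw [mul_assoc X Pstar Pstar, hPP]
  have hQT : (1 - Pstar)ᵀ = 1 - Pstar := by
    rw [Matrix.transpose_sub, Matrix.transpose_one, hPsT]
  have hQQ : (1 - Pstar) * (1 - Pstar) = 1 - Pstar := by
    rw [sub_mul, one_mul, mul_sub, mul_one, hPP]
    abel
  have hA2 : X * (1 - Pstar) * X = ((1 - Pstar) * X)ᵀ * ((1 - Pstar) * X) := by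
    rw [Matrix.transpose_mul, hXsT, hQT]
    simp only [← mul_assoc]
    rw [mul_assoc X (1 - Pstar) (1 - Pstar), hQQ]
  -- main PSD inequalities
  have I1 : 0 ≤ ((X * Pstar * X) *
      (Hstar * (1 - Pstar) - eps ⟨N, hNNb⟩ • (1 - Pstar))).trace := by
    rw [hM1, hA1]
    exact trace_mul_psdsum_nonneg (Pstar * X) T _ hc1 φ
  have I2 : 0 ≤ ((X * (1 - Pstar) * X) *
      (eps ⟨N - 1, hNm⟩ • Pstar - Hstar * Pstar)).trace := by
    rw [hM2, hA2]
    exact trace_mul_psdsum_nonneg ((1 - Pstar) * X) S _ hc2 φ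
  -- trace bookkeeping
  have h0 : (X * Pstar * X * Pstar).trace = 0 := by
    have e : X * Pstar * X * Pstar = X * (Pstar * X * Pstar) := by simp only [mul_assoc]
    rw [e, hPXP, mul_zero, Matrix.trace_zero]
  have htA1Q : ((X * Pstar * X) * (1 - Pstar)).trace = (X * Pstar * X).trace := by
    rw [mul_sub, mul_one, Matrix.trace_sub, h0, sub_zero]
  have hA2P : X * (1 - Pstar) * X = Pstar * X * X := by rw [hXQ]
  have htA2P : ((X * (1 - Pstar) * X) * Pstar).trace = (X * Pstar * X).trace := by
    rw [hA2P, Matrix.trace_mul_cycle (Pstar * X) X Pstar]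
    rw [← mul_assoc Pstar Pstar X, hPP]
    exact Matrix.trace_mul_cycle Pstar X X
  have hz1 : ((X * Pstar * X) * (Hstar * Pstar)).trace = 0 := by
    rw [hHP]
    have e : (X * Pstar * X) * (Pstar * Hstar) = X * (Pstar * X * Pstar) * Hstar := by
      noncomm_ring
    rw [e, hPXP, mul_zero, zero_mul, Matrix.trace_zero]
  -- the two spectral bounds
  have hB : eps ⟨N, hNNb⟩ * (X * Pstar * X).trace
      ≤ ((X * Pstar * X) * (Hstar * (1 - Pstar))).trace := by
    have e : ((X * Pstar * X) * (Hstar * (1 - Pstar) - eps ⟨N, hNNb⟩ • (1 - Pstar))).trace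
        = ((X * Pstar * X) * (Hstar * (1 - Pstar))).trace
          - eps ⟨N, hNNb⟩ * ((X * Pstar * X) * (1 - Pstar)).trace := by
      rw [mul_sub, Matrix.mul_smul, Matrix.trace_sub, Matrix.trace_smul, smul_eq_mul]
    rw [e, htA1Q] at I1
    linarith
  have hC : ((X * (1 - Pstar) * X) * (Hstar * Pstar)).trace
      ≤ eps ⟨N - 1, hNm⟩ * (X * Pstar * X).trace := by
    have e : ((X * (1 - Pstar) * X) * (eps ⟨N - 1, hNm⟩ • Pstar - Hstar * Pstar)).trace
        = eps ⟨N - 1, hNm⟩ * ((X * (1 - Pstar) * X) * Pstar).trace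
          - ((X * (1 - Pstar) * X) * (Hstar * Pstar)).trace := by
      rw [mul_sub, Matrix.mul_smul, Matrix.trace_sub, Matrix.trace_smul, smul_eq_mul]
    rw [e, htA2P] at I2
    linarith
  -- identity for the Omega term
  have cyc2 : ∀ A B C D : Mat Nb, (A * B * C * D).trace = (C * D * A * B).trace := by
    intro A B C D
    have e1 : A * B * C * D = (A * B) * (C * D) := by noncomm_ring
    have e2 : C * D * A * B = (C * D) * (A * B) := by noncomm_ring
    rw [e1, e2, Matrix.trace_mul_comm]
  have e0 : Xᵀ * OmegaOp Pstar Hstar X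
      = (X * Pstar * X * Hstar + X * Hstar * X * Pstar)
        - (X * Pstar * Hstar * X + X * X * (Hstar * Pstar)) := by
    rw [hXsT]; unfold OmegaOp; noncomm_ring
  have g1 : (X * Pstar * X * Hstar).trace
      = ((X * Pstar * X) * (Hstar * (1 - Pstar))).trace := by
    have hsplitH : X * Pstar * X * Hstar
        = (X * Pstar * X) * (Hstar * Pstar) + (X * Pstar * X) * (Hstar * (1 - Pstar)) := by
      noncomm_ring
    rw [hsplitH, Matrix.trace_add, hz1, zero_add]
  have g2 : (X * Hstar * X * Pstar).trace = (X * Pstar * X * Hstar).trace :=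
    cyc2 X Hstar X Pstar
  have g3 : (X * Pstar * Hstar * X).trace = (X * X * (Hstar * Pstar)).trace := by
    rw [Matrix.trace_mul_comm (X * Pstar * Hstar) X]
    have e : X * (X * Pstar * Hstar) = (X * X) * (Pstar * Hstar) := by noncomm_ring
    rw [e, ← hHP]
  have gXX : (X * X * (Hstar * Pstar)).trace
      = ((X * (1 - Pstar) * X) * (Hstar * Pstar)).trace := by
    have e : X * X * (Hstar * Pstar)
        = (X * Pstar * X) * (Hstar * Pstar) + (X * (1 - Pstar) * X) * (Hstar * Pstar) := by
      noncomm_ring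
    rw [e, Matrix.trace_add, hz1, zero_add]
  have hA : frobInner X (OmegaOp Pstar Hstar X)
      = 2 * (((X * Pstar * X) * (Hstar * (1 - Pstar))).trace
        - ((X * (1 - Pstar) * X) * (Hstar * Pstar)).trace) := by
    show (Xᵀ * OmegaOp Pstar Hstar X).trace = _
    rw [e0, Matrix.trace_sub, Matrix.trace_add, Matrix.trace_add, g2, g1, g3, gXX]
    ring
  -- norm identity
  have hD : frobNorm X ^ 2 = 2 * (X * Pstar * X).trace := by
    have h1 : frobNorm X ^ 2 = (Xᵀ * X).trace := by
      simp only [frobNorm]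
      exact Real.sq_sqrt (trace_transpose_mul_self_nonneg_s19 X)
    rw [h1, hXsT]
    have e : X * X = Pstar * X * X + X * Pstar * X := by
      calc X * X = (Pstar * X + X * Pstar) * X := by rw [hXt]
        _ = Pstar * X * X + X * Pstar * X := by rw [add_mul]
    rw [e, Matrix.trace_add, Matrix.trace_mul_cycle Pstar X X]
    ring
  -- the Hessian term
  have hPiX : piT Pstar X = X := by
    unfold piT
    have e : Pstar * X * (1 - Pstar) + (1 - Pstar) * X * Pstar
        = (Pstar * X + X * Pstar) - (Pstar * X * Pstar + Pstar * X * Pstar) := by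
      noncomm_ring
    rw [e, hPXP, hXt]
    simp
  have hadj : frobInner X (piT Pstar (hess X)) = frobInner X (hess X) := by
    set Y := hess X with hY
    show (Xᵀ * (Pstar * Y * (1 - Pstar) + (1 - Pstar) * Y * Pstar)).trace = (Xᵀ * Y).trace
    rw [hXsT, mul_add, Matrix.trace_add]
    have term1 : (X * (Pstar * Y * (1 - Pstar))).trace = ((X * Pstar) * Y).trace := by
      have e : X * (Pstar * Y * (1 - Pstar)) = (X * Pstar * Y) * (1 - Pstar) := by
        noncomm_ring
      rw [e, Matrix.trace_mul_comm]
      have e2 : (1 - Pstar) * (X * Pstar * Y) = ((1 - Pstar) * X) * (Pstar * Y) := by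
        noncomm_ring
      rw [e2, hQX]
      have e3 : (X * Pstar) * (Pstar * Y) = (X * (Pstar * Pstar)) * Y := by noncomm_ring
      rw [e3, hPP]
    have term2 : (X * ((1 - Pstar) * Y * Pstar)).trace = ((Pstar * X) * Y).trace := by
      have e : X * ((1 - Pstar) * Y * Pstar) = ((X * (1 - Pstar)) * Y) * Pstar := by
        noncomm_ring
      rw [e, hXQ, Matrix.trace_mul_comm]
      have e2 : Pstar * (Pstar * X * Y) = ((Pstar * Pstar) * X) * Y := by noncomm_ring
      rw [e2, hPP]
    rw [term1, term2, ← Matrix.trace_add, ← add_mul]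
    have e4 : X * Pstar + Pstar * X = X := by rw [add_comm]; exact hXt
    rw [e4]
  have hE2 : 0 ≤ frobInner X (piT Pstar (hess X)) := by
    rw [hadj]
    exact hesspsd X hXs
  -- put everything together
  rw [hPiX]
  have hFadd : frobInner X (OmegaOp Pstar Hstar X + piT Pstar (hess X))
      = frobInner X (OmegaOp Pstar Hstar X) + frobInner X (piT Pstar (hess X)) := by
    show (Xᵀ * _).trace = _
    rw [mul_add, Matrix.trace_add]; rfl
  rw [hFadd, hA, hD]
  have key : ν * (2 * (X * Pstar * X).trace)
      = 2 * (eps ⟨N, hNNb⟩ * (X * Pstar * X).trace)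
        - 2 * (eps ⟨N - 1, hNm⟩ * (X * Pstar * X).trace) := by
    rw [hν']; ring
  linarith
end
end
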